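/- arXiv:0811.1704 — 5 statements merged into one kernel-verified Lean document; each statement's English description precedes it below -/
import Mathlib

section
/- Let r, L > 0 and let f : [0,∞) → ℝ satisfy the usual conditions, with 0 < S̃ < ∞ where S̃ := r − π²/(8L²) − S/2 and S := limsup_{t→∞} (1/t)∫₀ᵗ f'(s)² ds. Let T(0) := inf{ t ≥ 0 : ∫₀ˢ ( r − π²/(8L²) − ½f'(u)² − 2L|f''(u)| ) du − 2L|f'(0)| ≥ 0 for all s ≥ t }. Then for every t ≥ T(0): (i) ∫₀ᵗ f'(s)² ds ≤ 2rt, and (ii) for every q > 0, the Lebesgue measure of { s ∈ [0,t] : |f'(s)| ≥ r√(2/(qS̃)) } is at most (qS̃/r) t. -/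
open MeasureTheory Filter

/-- Under the usual conditions on `f` with `S̃ ∈ (0,∞)`, letting
`T(0)` be the first time after which `∫₀ˢ (r - π²/(8L²) - f'(u)²/2 - 2L|f''(u)|) du - 2L|f'(0)| ≥ 0`
always holds, for every `t ≥ T(0)` one has `∫₀ᵗ f'(s)² ds ≤ 2rt`, and for every `q > 0` the
Lebesgue measure of `{s ∈ [0,t] : |f'(s)| ≥ r√(2/(q S̃))}` is at most `(q S̃ / r) t`. -/
theorem time_average_bounds (r L : ℝ) (hr : 0 < r) (hL : 0 < L) (f : ℝ → ℝ)
    (hf0 : f 0 = 0) (hf : ContDiff ℝ 2 f)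
    (husual : Tendsto (fun t => (1 / t) * ∫ s in (0:ℝ)..t, |deriv (deriv f) s|)
      atTop (nhds 0))
    (hbdd : IsBoundedUnder (· ≤ ·) atTop
      (fun t => (1 / t) * ∫ s in (0:ℝ)..t, (deriv f s) ^ 2))
    (S : ℝ)
    (hS : S = limsup (fun t => (1 / t) * ∫ s in (0:ℝ)..t, (deriv f s) ^ 2) atTop)
    (hpos : 0 < r - Real.pi ^ 2 / (8 * L ^ 2) - S / 2)
    (T0 : ℝ)
    (hT0 : T0 = sInf {u : ℝ | 0 ≤ u ∧ ∀ s ≥ u,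
      (∫ v in (0:ℝ)..s, (r - Real.pi ^ 2 / (8 * L ^ 2) - (1 / 2) * (deriv f v) ^ 2
          - 2 * L * |deriv (deriv f) v|)) - 2 * L * |deriv f 0| ≥ 0}) :
    ∀ t ≥ T0,
      (∫ s in (0:ℝ)..t, (deriv f s) ^ 2) ≤ 2 * r * t ∧
      ∀ q > (0:ℝ),
        volume {s ∈ Set.Icc (0:ℝ) t |
            r * Real.sqrt (2 / (q * (r - Real.pi ^ 2 / (8 * L ^ 2) - S / 2))) ≤ |deriv f s|}
          ≤ ENNReal.ofReal ((q * (r - Real.pi ^ 2 / (8 * L ^ 2) - S / 2) / r) * t) := by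
  have pi_pos := Real.pi_pos
  set c := Real.pi ^ 2 / (8 * L ^ 2) with hc
  have hc0 : 0 < c := by positivity
  set St := r - c - S / 2 with hStdef
  have hSt0 : 0 < St := hpos
  clear_value c St
  have hf1 : ContDiff ℝ 1 (deriv f) := by
    have h2 : ContDiff ℝ (1 + 1) f := by norm_num; exact hf
    exact (contDiff_succ_iff_deriv.mp h2).2.2
  have hcont1 : Continuous (deriv f) := hf.continuous_deriv (by norm_num)
  have hcont2 : Continuous (deriv (deriv f)) := hf1.continuous_deriv le_rfl
  set F : ℝ → ℝ := fun s => (∫ v in (0:ℝ)..s, (r - c - (1 / 2) * (deriv f v) ^ 2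
      - 2 * L * |deriv (deriv f) v|)) - 2 * L * |deriv f 0| with hFdef
  have hgcont : Continuous (fun v => r - c - (1 / 2) * (deriv f v) ^ 2
      - 2 * L * |deriv (deriv f) v|) := by fun_prop
  have hFcont : Continuous F :=
    ((intervalIntegral.continuous_primitive
      (fun a b => hgcont.intervalIntegrable a b) 0)).sub continuous_const
  have hdecomp : ∀ t : ℝ, (∫ v in (0:ℝ)..t, (r - c - (1 / 2) * (deriv f v) ^ 2
      - 2 * L * |deriv (deriv f) v|))
      = (r - c) * t - (1 / 2) * (∫ v in (0:ℝ)..t, (deriv f v) ^ 2)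
        - 2 * L * (∫ v in (0:ℝ)..t, |deriv (deriv f) v|) := by
    intro t
    have i1 : IntervalIntegrable (fun v => (deriv f v) ^ 2) volume 0 t :=
      (hcont1.pow 2).intervalIntegrable 0 t
    have i2 : IntervalIntegrable (fun v => |deriv (deriv f) v|) volume 0 t :=
      hcont2.abs.intervalIntegrable 0 t
    rw [intervalIntegral.integral_sub ((intervalIntegrable_const).sub (i1.const_mul _))
        (i2.const_mul _),
      intervalIntegral.integral_sub intervalIntegrable_const (i1.const_mul _),
      intervalIntegral.integral_const, intervalIntegral.integral_const_mul,
      intervalIntegral.integral_const_mul]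
    simp [smul_eq_mul]; ring
  set K := 2 * L * |deriv f 0| with hKdef
  have hK0 : 0 ≤ K := by rw [hKdef]; positivity
  set U := {u : ℝ | 0 ≤ u ∧ ∀ s ≥ u, F s ≥ 0} with hUdef
  have hT0U : T0 = sInf U := hT0
  -- U is nonempty
  have ev1 : ∀ᶠ t in atTop, (1 / t) * (∫ s in (0:ℝ)..t, |deriv (deriv f) s|) ≤ St / (8 * L) :=
    husual.eventually (eventually_le_nhds (by positivity))
  have ev2 : ∀ᶠ t in atTop, (1 / t) * (∫ s in (0:ℝ)..t, (deriv f s) ^ 2) < S + St / 2 :=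
    eventually_lt_of_limsup_lt (by rw [← hS]; linarith) hbdd
  have evF : ∀ᶠ s in atTop, F s ≥ 0 := by
    filter_upwards [ev1, ev2, eventually_ge_atTop (max 1 (4 * K / St))] with t h1 h2 h3
    have ht : (0:ℝ) < t := lt_of_lt_of_le one_pos (le_trans (le_max_left _ _) h3)
    have ht4 : 4 * K / St ≤ t := le_trans (le_max_right _ _) h3
    have hKt : K ≤ St / 4 * t := by
      rw [div_le_iff₀ hSt0] at ht4
      nlinarith [ht4]
    set I1 := ∫ s in (0:ℝ)..t, |deriv (deriv f) s| with hI1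
    set I2 := ∫ s in (0:ℝ)..t, (deriv f s) ^ 2 with hI2
    clear_value I1 I2
    have b1 : I1 ≤ St / (8 * L) * t := by
      rw [one_div, inv_mul_eq_div] at h1
      exact (div_le_iff₀ ht).mp h1
    have b2 : I2 ≤ (S + St / 2) * t := by
      rw [one_div, inv_mul_eq_div] at h2
      exact le_of_lt ((div_lt_iff₀ ht).mp h2)
    have b1' : 2 * L * I1 ≤ St / 4 * t := by
      have := mul_le_mul_of_nonneg_left b1 (by positivity : (0:ℝ) ≤ 2 * L)
      have heq : 2 * L * (St / (8 * L) * t) = St / 4 * t := by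
        field_simp; ring
      linarith
    have key : (r - c) * t - (1 / 2) * ((S + St / 2) * t) - St / 4 * t - St / 4 * t
        = St / 4 * t := by rw [hStdef]; ring
    have h5 : 0 ≤ St / 4 * t := by positivity
    show F t ≥ 0
    rw [hFdef]
    simp only
    rw [hdecomp t, ← hI1, ← hI2]
    linarith
  obtain ⟨u, hu⟩ := eventually_atTop.mp evF
  have hUne : U.Nonempty := ⟨max u 0, le_max_right _ _,
    fun s hs => hu s (le_trans (le_max_left _ _) hs)⟩
  have hUbdd : BddBelow U := ⟨0, fun x hx => hx.1⟩
  have hT0nn : 0 ≤ T0 := by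
    rw [hT0U]; exact le_csInf hUne fun x hx => hx.1
  -- F is nonnegative beyond T0
  have hFt : ∀ t ≥ T0, 0 ≤ F t := by
    intro t ht
    have hIoi : ∀ s ∈ Set.Ioi t, 0 ≤ F s := by
      intro s hs
      obtain ⟨v, hvU, hvs⟩ := (csInf_lt_iff hUbdd hUne).mp
        (lt_of_le_of_lt (hT0U ▸ ht) hs)
      exact hvU.2 s hvs.le
    exact ge_of_tendsto (hFcont.continuousAt.tendsto.mono_left nhdsWithin_le_nhds)
      (eventually_nhdsWithin_of_forall hIoi)
  intro t ht
  have ht0 : 0 ≤ t := le_trans hT0nn ht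
  have hI1nn : 0 ≤ ∫ v in (0:ℝ)..t, |deriv (deriv f) v| :=
    intervalIntegral.integral_nonneg ht0 fun u _ => abs_nonneg _
  have hF := hFt t ht
  rw [hFdef] at hF
  simp only at hF
  rw [hdecomp t] at hF
  have hmain : (∫ s in (0:ℝ)..t, (deriv f s) ^ 2) ≤ 2 * r * t := by
    have h2L : 0 ≤ 2 * L * ∫ v in (0:ℝ)..t, |deriv (deriv f) v| := by positivity
    nlinarith [mul_nonneg hc0.le ht0]
  refine ⟨hmain, ?_⟩
  intro q hq
  set a := r * Real.sqrt (2 / (q * St)) with ha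
  have hsq : Real.sqrt (2 / (q * St)) ^ 2 = 2 / (q * St) :=
    Real.sq_sqrt (by positivity)
  have ha2 : a ^ 2 = 2 * r ^ 2 / (q * St) := by
    rw [ha, mul_pow, hsq]; ring
  have ha2pos : 0 < a ^ 2 := by rw [ha2]; positivity
  set A := {s ∈ Set.Icc (0:ℝ) t | a ≤ |deriv f s|} with hA
  have hAsub : A ⊆ Set.Icc 0 t := fun s hs => hs.1
  have hAmeas : MeasurableSet A :=
    measurableSet_Icc.inter ((isClosed_le continuous_const hcont1.abs).measurableSet)
  have hint : IntegrableOn (fun s => (deriv f s) ^ 2) (Set.Icc 0 t) volume :=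
    (hcont1.pow 2).integrableOn_Icc
  have hintA : IntegrableOn (fun s => (deriv f s) ^ 2) A volume :=
    hint.mono_set hAsub
  have h1 : a ^ 2 * (volume A).toReal ≤ ∫ s in A, (deriv f s) ^ 2 := by
    have hmono := setIntegral_mono_on (μ := volume) (f := fun _ => a ^ 2)
      (g := fun s => (deriv f s) ^ 2) ((integrableOn_const_iff (C := a ^ 2)).mpr (Or.inr ?_)) hintA hAmeas
      (fun x hx => by
        have := hx.2
        calc a ^ 2 ≤ |deriv f x| ^ 2 := by
              apply pow_le_pow_left₀ (by positivity) this
          _ = (deriv f x) ^ 2 := sq_abs _)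
    · rwa [setIntegral_const, smul_eq_mul, mul_comm] at hmono
    · exact lt_of_le_of_lt (measure_mono hAsub) (by simp [Real.volume_Icc])
  have h2 : (∫ s in A, (deriv f s) ^ 2) ≤ ∫ s in Set.Icc 0 t, (deriv f s) ^ 2 :=
    setIntegral_mono_set hint (Eventually.of_forall fun x => sq_nonneg _)
      (HasSubset.Subset.eventuallyLE hAsub)
  have h3 : (∫ s in Set.Icc (0:ℝ) t, (deriv f s) ^ 2) = ∫ s in (0:ℝ)..t, (deriv f s) ^ 2 := by
    rw [intervalIntegral.integral_of_le ht0, integral_Icc_eq_integral_Ioc]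
  have hchain : a ^ 2 * (volume A).toReal ≤ 2 * r * t := by
    calc a ^ 2 * (volume A).toReal ≤ ∫ s in A, (deriv f s) ^ 2 := h1
      _ ≤ ∫ s in Set.Icc (0:ℝ) t, (deriv f s) ^ 2 := h2
      _ = ∫ s in (0:ℝ)..t, (deriv f s) ^ 2 := h3
      _ ≤ 2 * r * t := hmain
  have hAfin : volume A ≠ ⊤ :=
    (lt_of_le_of_lt (measure_mono hAsub) (by simp [Real.volume_Icc])).ne
  have hrne : r ≠ 0 := hr.ne'
  have hqStne : q * St ≠ 0 := by positivity
  have hkey : a ^ 2 * (q * St / r * t) = 2 * r * t := by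
    rw [ha2]; field_simp
  have htoReal : (volume A).toReal ≤ q * St / r * t := by
    have := hchain.trans_eq hkey.symm
    exact le_of_mul_le_mul_left this ha2pos
  calc volume A = ENNReal.ofReal ((volume A).toReal) :=
        (ENNReal.ofReal_toReal hAfin).symm
    _ ≤ ENNReal.ofReal (q * St / r * t) := ENNReal.ofReal_le_ofReal htoReal
end

section
/- Let r, L > 0 and let f : [0,∞) → ℝ satisfy the usual conditions, with 0 < S̃ < ∞ where S̃ := r − π²/(8L²) − S/2 and S := limsup_{t→∞} (1/t)∫₀ᵗ f'(s)² ds. Fix q > 0 and p ∈ (2q, 1). Define J_t := inf_{s ≥ t} ∫₀ˢ ( r − π²/(8L²) − ½f'(u)² − 2L|f''(u)| − qS̃ ) du, let U := { t ≥ 0 : J_u > J_t for all u > t }, let V := { t ≥ 0 : |f'(t)| < r√(2/(qS̃)) }, and let T(p) := inf{ t ≥ 0 : ∫₀ˢ ( r − π²/(8L²) − ½f'(u)² − 2L|f''(u)| ) du − 2L|f'(0)| ≥ pS̃s for all s ≥ t }. Then for every t ≥ T(p), the Lebesgue measure of U ∩ V ∩ [0,t] is at least (p − 2q)(S̃/r)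 t. -/
open MeasureTheory Filter Set
set_option maxHeartbeats 1000000


lemma stieltjes_aux (r : ℝ) (hr : 0 < r) (J : ℝ → ℝ) (hmono : Monotone J)
    (hlip : ∀ u u' : ℝ, u ≤ u' → J u' - J u ≤ r * (u' - u)) (t : ℝ) :
    ENNReal.ofReal (J t - J 0)
      ≤ ENNReal.ofReal r * volume ({u : ℝ | 0 ≤ u ∧ ∀ v > u, J u < J v} ∩ Icc 0 t) := by
  classical
  set U := {u : ℝ | 0 ≤ u ∧ ∀ v > u, J u < J v} with hUdef
  have hcont : Continuous J := by
    have : LipschitzWith ⟨r, hr.le⟩ J := by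
      apply LipschitzWith.of_dist_le_mul
      intro x y
      show dist (J x) (J y) ≤ r * dist x y
      rw [Real.dist_eq, Real.dist_eq]
      rcases le_total x y with h | h
      · rw [abs_sub_comm, abs_of_nonneg (sub_nonneg.2 (hmono h)), abs_sub_comm x y,
          abs_of_nonneg (sub_nonneg.2 h)]
        linarith [hlip x y h]
      · rw [abs_of_nonneg (sub_nonneg.2 (hmono h)), abs_of_nonneg (sub_nonneg.2 h)]
        linarith [hlip y x h]
    exact this.continuous
  have hleft : ∀ a : ℝ, Function.leftLim J a = J a := fun a =>
    leftLim_eq_of_tendsto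
      (hcont.continuousAt.tendsto.mono_left nhdsWithin_le_nhds)
  set SJ : StieltjesFunction ℝ := ⟨J, hmono, fun x => hcont.continuousAt.continuousWithinAt⟩
    with hSJ
  have hSJapp : ∀ x, SJ x = J x := fun x => rfl
  have hKmono : Monotone (fun x => r * x - J x) := by
    intro a b hab
    have := hlip a b hab
    simp only
    nlinarith
  set SK : StieltjesFunction ℝ := ⟨fun x => r * x - J x, hKmono,
    fun x => ((continuous_const.mul continuous_id).sub hcont).continuousAt.continuousWithinAt⟩
    with hSK
  have hsum : SJ.measure + SK.measure = ENNReal.ofReal r • volume := by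
    refine Measure.ext_of_Ioc' _ _ ?_ ?_
    · intro a b _
      rw [Measure.add_apply, SJ.measure_Ioc, SK.measure_Ioc]
      exact ENNReal.add_ne_top.2 ⟨ENNReal.ofReal_ne_top, ENNReal.ofReal_ne_top⟩
    intro a b hab
    rw [Measure.add_apply, SJ.measure_Ioc, SK.measure_Ioc, Measure.smul_apply,
      Real.volume_Ioc, smul_eq_mul, ← ENNReal.ofReal_mul hr.le]
    have h1 : (0:ℝ) ≤ J b - J a := by have := hmono hab.le; linarith
    rw [hSJapp, hSJapp]
    show ENNReal.ofReal (J b - J a) + ENNReal.ofReal ((r * b - J b) - (r * a - J a)) = _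
    rw [← ENNReal.ofReal_add h1 (by have := hlip a b hab.le; linarith)]
    ring_nf
  have hled : ∀ s : Set ℝ, SJ.measure s ≤ ENNReal.ofReal r * volume s := by
    intro s
    calc SJ.measure s ≤ (SJ.measure + SK.measure) s := by
          rw [Measure.add_apply]; exact le_self_add
      _ = ENNReal.ofReal r * volume s := by rw [hsum]; rfl
  have hsing : ∀ a : ℝ, SJ.measure {a} = 0 := by
    intro a
    rw [SJ.measure_singleton, hleft, sub_self, ENNReal.ofReal_zero]
  set P : ℝ → Prop := fun x => ∃ w, x < w ∧ J w ≤ J x with hP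
  set v : ℝ → ℝ := fun x => if h : P x then h.choose else x + 1 with hv
  have hvP : ∀ x, P x → x < v x ∧ J (v x) = J x := by
    intro x hx
    rw [hv]; simp only [dif_pos hx]
    obtain ⟨h1, h2⟩ := hx.choose_spec
    exact ⟨h1, le_antisymm h2 (hmono h1.le)⟩
  have hIcc_null : ∀ x, P x → SJ.measure (Icc x (v x)) = 0 := by
    intro x hx
    rw [SJ.measure_Icc, hleft]
    show ENNReal.ofReal (J (v x) - J x) = 0
    rw [(hvP x hx).2, sub_self, ENNReal.ofReal_zero]
  set N : Set ℝ := Ioc 0 t \ U with hN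
  have hNP : ∀ x ∈ N, P x := by
    intro x hx
    obtain ⟨hx1, hx2⟩ := hx
    rw [hUdef] at hx2
    simp only [mem_setOf_eq, not_and, not_forall, not_lt] at hx2
    obtain ⟨w, hw1, hw2⟩ := hx2 hx1.1.le
    exact ⟨w, hw1, hw2⟩
  set W : Set ℝ := ⋃ i : N, Ioo (i : ℝ) (v i) with hW
  have hWnull : SJ.measure W = 0 := by
    obtain ⟨T, hTc, hTU⟩ := TopologicalSpace.isOpen_iUnion_countable
      (fun i : N => Ioo (i : ℝ) (v i)) (fun i => isOpen_Ioo)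
    rw [hW, ← hTU]
    refine (measure_biUnion_null_iff hTc).2 ?_
    intro i _
    exact measure_mono_null Ioo_subset_Icc_self (hIcc_null i (hNP i i.2))
  have hsubv : ∀ x ∈ N, x < v x := fun x hx => (hvP x (hNP x hx)).1
  have hdisj : (N \ W).PairwiseDisjoint (fun x => Ioo x (v x)) := by
    intro x hx y hy hxy
    have key : ∀ a b : ℝ, a ∈ N \ W → b ∈ N \ W → a < b →
        Disjoint (Ioo a (v a)) (Ioo b (v b)) := by
      intro a b ha hb hab
      rw [Set.disjoint_left]
      intro z hza hzb
      have hbm : b ∈ Ioo a (v a) := ⟨hab, lt_trans hzb.1 hza.2⟩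
      have : b ∈ W := by
        rw [hW]
        exact mem_iUnion.2 ⟨⟨a, ha.1⟩, hbm⟩
      exact hb.2 this
    rcases lt_or_gt_of_ne hxy with h | h
    · exact key x y hx hy h
    · exact (key y x hy hx h).symm
  have hcnt : (N \ W).Countable :=
    hdisj.countable_of_isOpen (fun i _ => isOpen_Ioo)
      (fun i hi => nonempty_Ioo.2 (hsubv i hi.1))
  have hNWnull : SJ.measure (N \ W) = 0 := by
    refine measure_mono_null (show N \ W ⊆ ⋃ x ∈ (N \ W), ({x} : Set ℝ) from
      fun z hz => mem_biUnion hz rfl) ((measure_biUnion_null_iff hcnt).2 ?_)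
    intro i _
    exact hsing i
  have hNnull : SJ.measure N = 0 := by
    refine le_antisymm ?_ (by positivity)
    calc SJ.measure N ≤ SJ.measure (N ∩ W) + SJ.measure (N \ W) :=
          measure_le_inter_add_diff _ _ _
      _ ≤ SJ.measure W + 0 := by
          rw [hNWnull]
          exact add_le_add (measure_mono inter_subset_right) le_rfl
      _ = 0 := by rw [hWnull, add_zero]
  calc ENNReal.ofReal (J t - J 0) = SJ.measure (Ioc 0 t) := by
        rw [SJ.measure_Ioc]
    _ ≤ SJ.measure (Ioc 0 t ∩ U) + SJ.measure N := measure_le_inter_add_diff _ _ _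
    _ = SJ.measure (Ioc 0 t ∩ U) := by rw [hNnull, add_zero]
    _ ≤ ENNReal.ofReal r * volume (Ioc 0 t ∩ U) := hled _
    _ ≤ ENNReal.ofReal r * volume (U ∩ Icc 0 t) := by
        refine mul_le_mul_right (measure_mono ?_) _
        intro z hz
        exact ⟨hz.2, Ioc_subset_Icc_self hz.1⟩


/-- Under the usual conditions on `f` with `S̃ ∈ (0,∞)`, for `q > 0` and
`p ∈ (2q, 1)`, with `J t = inf_{s ≥ t} ∫₀ˢ (r - π²/(8L²) - f'(u)²/2 - 2L|f''(u)| - qS̃) du`,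
`U = {t ≥ 0 : J u > J t ∀ u > t}`, `V = {t ≥ 0 : |f'(t)| < r√(2/(qS̃))}` and `T(p)` the first
time after which `∫₀ˢ (...) du - 2L|f'(0)| ≥ pS̃s` always holds, for every `t ≥ T(p)` the
Lebesgue measure of `U ∩ V ∩ [0,t]` is at least `(p - 2q)(S̃/r) t`. -/
theorem good_set_measure (r L q p : ℝ) (hr : 0 < r) (hL : 0 < L) (hq : 0 < q)
    (hp : p ∈ Set.Ioo (2 * q) 1)
    (f : ℝ → ℝ) (hf0 : f 0 = 0) (hf : ContDiff ℝ 2 f)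
    (husual : Tendsto (fun t => (1 / t) * ∫ s in (0:ℝ)..t, |deriv (deriv f) s|)
      atTop (nhds 0))
    (hbdd : IsBoundedUnder (· ≤ ·) atTop
      (fun t => (1 / t) * ∫ s in (0:ℝ)..t, (deriv f s) ^ 2))
    (S : ℝ)
    (hS : S = limsup (fun t => (1 / t) * ∫ s in (0:ℝ)..t, (deriv f s) ^ 2) atTop)
    (hpos : 0 < r - Real.pi ^ 2 / (8 * L ^ 2) - S / 2)
    (J : ℝ → ℝ)
    (hJ : ∀ u : ℝ, J u = sInf ((fun s => ∫ v in (0:ℝ)..s,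
      (r - Real.pi ^ 2 / (8 * L ^ 2) - (1 / 2) * (deriv f v) ^ 2
        - 2 * L * |deriv (deriv f) v|
        - q * (r - Real.pi ^ 2 / (8 * L ^ 2) - S / 2))) '' Set.Ici u))
    (U V : Set ℝ)
    (hU : U = {u : ℝ | 0 ≤ u ∧ ∀ v > u, J u < J v})
    (hV : V = {u : ℝ | 0 ≤ u ∧
      |deriv f u| < r * Real.sqrt (2 / (q * (r - Real.pi ^ 2 / (8 * L ^ 2) - S / 2)))})
    (Tp : ℝ)
    (hTp : Tp = sInf {u : ℝ | 0 ≤ u ∧ ∀ s ≥ u,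
      (∫ v in (0:ℝ)..s, (r - Real.pi ^ 2 / (8 * L ^ 2) - (1 / 2) * (deriv f v) ^ 2
          - 2 * L * |deriv (deriv f) v|)) - 2 * L * |deriv f 0|
        ≥ p * (r - Real.pi ^ 2 / (8 * L ^ 2) - S / 2) * s}) :
    ∀ t ≥ Tp,
      ENNReal.ofReal ((p - 2 * q) * ((r - Real.pi ^ 2 / (8 * L ^ 2) - S / 2) / r) * t)
        ≤ volume (U ∩ V ∩ Set.Icc 0 t) := by
  classical
  obtain ⟨hp2q, hp1⟩ := hp
  have hppos : 0 < p := lt_trans (by linarith) hp2q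
  have hpq : 0 < p - 2 * q := by linarith
  set St := r - Real.pi ^ 2 / (8 * L ^ 2) - S / 2 with hStdef
  have hStpos : 0 < St := hpos
  set c := r * Real.sqrt (2 / (q * St)) with hcdef
  have hc0 : 0 ≤ c := mul_nonneg hr.le (Real.sqrt_nonneg _)
  -- continuity of derivatives
  have hc1 : Continuous (deriv f) := hf.continuous_deriv (by norm_num)
  have hc2 : Continuous (deriv (deriv f)) := by
    have h2 : ContDiff ℝ ((1 : WithTop ℕ∞) + 1) f := by
      have h21 : ((1 : WithTop ℕ∞) + 1) = 2 := by norm_num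
      rw [h21]; exact hf
    exact ((contDiff_succ_iff_deriv.mp h2).2.2).continuous_deriv le_rfl
  have hA0 : 0 ≤ Real.pi ^ 2 / (8 * L ^ 2) := by positivity
  -- the two integrands
  set k1 : ℝ → ℝ := fun v => r - Real.pi ^ 2 / (8 * L ^ 2) - (1 / 2) * (deriv f v) ^ 2
      - 2 * L * |deriv (deriv f) v| with hk1
  have hk1cont : Continuous k1 := by
    rw [hk1]
    exact (continuous_const.sub (continuous_const.mul (hc1.pow 2))).sub
      (continuous_const.mul hc2.abs)
  set G : ℝ → ℝ := (fun s => ∫ v in (0:ℝ)..s,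
      (r - Real.pi ^ 2 / (8 * L ^ 2) - (1 / 2) * (deriv f v) ^ 2
        - 2 * L * |deriv (deriv f) v| - q * St)) with hG
  have hgcont : Continuous (fun v : ℝ => r - Real.pi ^ 2 / (8 * L ^ 2)
      - (1 / 2) * (deriv f v) ^ 2 - 2 * L * |deriv (deriv f) v| - q * St) :=
    ((continuous_const.sub (continuous_const.mul (hc1.pow 2))).sub
      (continuous_const.mul hc2.abs)).sub continuous_const
  clear_value St c k1 G
  have hGcont : Continuous G := by
    rw [hG]
    exact intervalIntegral.continuous_primitive (fun a b => hgcont.intervalIntegrable a b) 0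
  have hgler : ∀ v : ℝ, (r - Real.pi ^ 2 / (8 * L ^ 2) - (1 / 2) * (deriv f v) ^ 2
      - 2 * L * |deriv (deriv f) v| - q * St) ≤ r := by
    intro v
    have h1 : 0 ≤ (1 / 2 : ℝ) * (deriv f v) ^ 2 := by positivity
    have h2 : 0 ≤ 2 * L * |deriv (deriv f) v| := by positivity
    have h3 : 0 < q * St := mul_pos hq hStpos
    linarith
  have hGlip : ∀ a b : ℝ, a ≤ b → G b - G a ≤ r * (b - a) := by
    intro a b hab
    have hadd := intervalIntegral.integral_add_adjacent_intervals
      (hgcont.intervalIntegrable (μ := volume) 0 a) (hgcont.intervalIntegrable (μ := volume) a b)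
    have hmono := intervalIntegral.integral_mono_on hab
      (hgcont.intervalIntegrable (μ := volume) a b) intervalIntegrable_const
      (fun x _ => hgler x)
    rw [intervalIntegral.integral_const, smul_eq_mul] at hmono
    simp only [hG]
    nlinarith
  -- relation between G and the k1 primitive
  have hGk : ∀ s : ℝ, G s = (∫ v in (0:ℝ)..s, k1 v) - q * St * s := by
    intro s
    have hint : IntervalIntegrable k1 volume 0 s := hk1cont.intervalIntegrable 0 s
    calc G s = ∫ v in (0:ℝ)..s, (k1 v - q * St) := by simp only [hG, hk1]
      _ = (∫ v in (0:ℝ)..s, k1 v) - q * St * s := by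
          rw [intervalIntegral.integral_sub hint intervalIntegrable_const,
            intervalIntegral.integral_const, smul_eq_mul]
          ring
  -- splitting of the k1 primitive
  have hsplit : ∀ s : ℝ, (∫ v in (0:ℝ)..s, k1 v)
      = (r - Real.pi ^ 2 / (8 * L ^ 2)) * s
        - (1 / 2) * (∫ v in (0:ℝ)..s, (deriv f v) ^ 2)
        - 2 * L * (∫ v in (0:ℝ)..s, |deriv (deriv f) v|) := by
    intro s
    have i1 : IntervalIntegrable (fun _ : ℝ => r - Real.pi ^ 2 / (8 * L ^ 2)) volume 0 s :=
      intervalIntegrable_const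
    have i2 : IntervalIntegrable (fun v => (1 / 2 : ℝ) * (deriv f v) ^ 2) volume 0 s :=
      (continuous_const.mul (hc1.pow 2)).intervalIntegrable 0 s
    have i3 : IntervalIntegrable (fun v => 2 * L * |deriv (deriv f) v|) volume 0 s :=
      (continuous_const.mul hc2.abs).intervalIntegrable 0 s
    simp only [hk1]
    rw [intervalIntegral.integral_sub (i1.sub i2) i3, intervalIntegral.integral_sub i1 i2,
      intervalIntegral.integral_const, intervalIntegral.integral_const_mul,
      intervalIntegral.integral_const_mul, smul_eq_mul]
    ring
  -- eventual lower bound on the k1 primitive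
  set ε := (1 - p) * St / (2 * (1 + 2 * L)) with hεdef
  have hεpos : 0 < ε := div_pos (mul_pos (by linarith) hStpos) (by linarith)
  have hεid : ε * (2 * (1 + 2 * L)) = (1 - p) * St := by
    rw [hεdef]; field_simp
  have hev1 : ∀ᶠ s in atTop, (1 / s) * ∫ v in (0:ℝ)..s, (deriv f v) ^ 2 < S + ε := by
    apply eventually_lt_of_limsup_lt _ hbdd
    rw [← hS]; linarith
  have hev2 : ∀ᶠ s in atTop, (1 / s) * ∫ v in (0:ℝ)..s, |deriv (deriv f) v| < ε :=
    husual.eventually_lt_const hεpos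
  obtain ⟨M, hM⟩ := eventually_atTop.1 (hev1.and hev2)
  set X := 4 * L * |deriv f 0| / ((1 - p) * St) with hXdef
  clear_value ε X
  have hkey : ∀ s : ℝ, max M (max 1 X) ≤ s →
      (∫ v in (0:ℝ)..s, k1 v) - 2 * L * |deriv f 0| ≥ p * St * s := by
    intro s hs
    obtain ⟨h1, h2⟩ := hM s (le_trans (le_max_left _ _) hs)
    have hs1 : (1:ℝ) ≤ s := le_trans (le_trans (le_max_left _ _) (le_max_right _ _)) hs
    have hs0 : 0 < s := by linarith
    have hsX : X ≤ s := le_trans (le_trans (le_max_right _ _) (le_max_right _ _)) hs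
    have hs4 : 4 * L * |deriv f 0| ≤ s * ((1 - p) * St) := by
      rw [hXdef] at hsX
      have := (div_le_iff₀ (by nlinarith : (0:ℝ) < (1 - p) * St)).1 hsX
      linarith
    have hI2 : (∫ v in (0:ℝ)..s, (deriv f v) ^ 2) < (S + ε) * s := by
      have := mul_lt_mul_of_pos_right h1 hs0
      rw [one_div, inv_mul_eq_div, div_mul_cancel₀ _ hs0.ne'] at this
      linarith
    have hI3 : (∫ v in (0:ℝ)..s, |deriv (deriv f) v|) < ε * s := by
      have := mul_lt_mul_of_pos_right h2 hs0
      rw [one_div, inv_mul_eq_div, div_mul_cancel₀ _ hs0.ne'] at this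
      linarith
    have hrA : r - Real.pi ^ 2 / (8 * L ^ 2) = St + S / 2 := by rw [hStdef]; ring
    rw [hsplit s, hrA]
    have hb1 : (1 / 2 : ℝ) * (∫ v in (0:ℝ)..s, (deriv f v) ^ 2) ≤ (1 / 2) * ((S + ε) * s) := by
      linarith
    have hb2 : 2 * L * (∫ v in (0:ℝ)..s, |deriv (deriv f) v|) ≤ 2 * L * (ε * s) :=
      mul_le_mul_of_nonneg_left hI3.le (by positivity)
    have e1 : ε * s * (1 / 2 + 2 * L) ≤ ε * s * (1 + 2 * L) :=
      mul_le_mul_of_nonneg_left (by linarith) (by positivity)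
    have e2 : ε * s * (1 + 2 * L) = s * ((1 - p) * St) / 2 := by
      linear_combination (s / 2) * hεid
    linarith
  -- Tp properties
  have hAne : Set.Nonempty {u : ℝ | 0 ≤ u ∧ ∀ s ≥ u,
      (∫ v in (0:ℝ)..s, k1 v) - 2 * L * |deriv f 0| ≥ p * St * s} := by
    refine ⟨max M (max 1 X),
      le_trans zero_le_one (le_trans (le_max_left _ _) (le_max_right _ _)), ?_⟩
    intro s hs
    exact hkey s hs
  have hTp0 : 0 ≤ Tp := by
    rw [hTp]
    exact le_csInf hAne (fun u hu => hu.1)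
  have hTpA : ∀ s, Tp < s → (∫ v in (0:ℝ)..s, k1 v) - 2 * L * |deriv f 0| ≥ p * St * s := by
    intro s hs
    rw [hTp] at hs
    obtain ⟨u, hu, hus⟩ := exists_lt_of_csInf_lt hAne hs
    exact hu.2 s hus.le
  have hTpmem : ∀ s, Tp ≤ s → (∫ v in (0:ℝ)..s, k1 v) - 2 * L * |deriv f 0| ≥ p * St * s := by
    intro s hs
    rcases eq_or_lt_of_le hs with heq | hlt
    · have hFc : Continuous (fun x : ℝ =>
          (∫ v in (0:ℝ)..x, k1 v) - 2 * L * |deriv f 0| - p * St * x) :=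
        ((intervalIntegral.continuous_primitive
          (fun a b => hk1cont.intervalIntegrable a b) 0).sub continuous_const).sub
          (continuous_const.mul continuous_id)
      have hlim : Tendsto (fun x : ℝ =>
          (∫ v in (0:ℝ)..x, k1 v) - 2 * L * |deriv f 0| - p * St * x)
          (nhdsWithin Tp (Ioi Tp))
          (nhds ((∫ v in (0:ℝ)..Tp, k1 v) - 2 * L * |deriv f 0| - p * St * Tp)) :=
        (hFc.tendsto Tp).mono_left nhdsWithin_le_nhds
      have hev : ∀ᶠ x in nhdsWithin Tp (Ioi Tp),
          0 ≤ (∫ v in (0:ℝ)..x, k1 v) - 2 * L * |deriv f 0| - p * St * x := by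
        filter_upwards [self_mem_nhdsWithin] with x hx
        have := hTpA x hx
        linarith
      have h0 := ge_of_tendsto hlim hev
      rw [← heq]
      linarith
    · exact hTpA s hlt
  -- lower bounds for G
  have hGlow : ∀ s, Tp ≤ s → (p - q) * St * s ≤ G s := by
    intro s hs
    have h := hTpmem s hs
    have hs0 : 0 ≤ s := le_trans hTp0 hs
    have habs : 0 ≤ 2 * L * |deriv f 0| := by positivity
    rw [hGk]
    nlinarith
  have hGnonneg : ∀ s, Tp ≤ s → 0 ≤ G s := by
    intro s hs
    have hs0 : 0 ≤ s := le_trans hTp0 hs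
    have h := hGlow s hs
    nlinarith [mul_nonneg (mul_nonneg (by linarith : (0:ℝ) ≤ p - q) hStpos.le) hs0]
  have hbb : ∀ u : ℝ, BddBelow (G '' Ici u) := by
    intro u
    obtain ⟨m, hm⟩ := (isCompact_Icc (a := u) (b := Tp)).bddBelow_image hGcont.continuousOn
    refine ⟨min m 0, ?_⟩
    rintro y ⟨s, hs, rfl⟩
    rcases le_total s Tp with h | h
    · exact le_trans (min_le_left _ _) (hm (mem_image_of_mem G ⟨hs, h⟩))
    · exact le_trans (min_le_right _ _) (hGnonneg s h)
  have hJle : ∀ u s : ℝ, u ≤ s → J u ≤ G s := by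
    intro u s h
    rw [hJ u]
    exact csInf_le (hbb u) ⟨s, h, rfl⟩
  have hmonoJ : Monotone J := by
    intro u u' h
    rw [hJ u, hJ u']
    exact csInf_le_csInf (hbb u) ⟨G u', ⟨u', mem_Ici.2 le_rfl, rfl⟩⟩
      (image_mono (Ici_subset_Ici.2 h))
  have hJlip : ∀ u u' : ℝ, u ≤ u' → J u' - J u ≤ r * (u' - u) := by
    intro u u' h
    obtain ⟨σ, hσmem, hσmin⟩ :=
      isCompact_Icc.exists_isMinOn (nonempty_Icc.2 h) hGcont.continuousOn
    have hJlb : min (G σ) (J u') ≤ J u := by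
      rw [hJ u]
      refine le_csInf ⟨G u, u, mem_Ici.2 le_rfl, rfl⟩ ?_
      rintro y ⟨s, hs, rfl⟩
      rcases le_total s u' with h1 | h1
      · exact le_trans (min_le_left _ _) (hσmin ⟨hs, h1⟩)
      · exact le_trans (min_le_right _ _) (hJle u' s h1)
    rcases le_total (J u') (G σ) with hc' | hc'
    · rw [min_eq_right hc'] at hJlb
      have hnn : 0 ≤ r * (u' - u) := mul_nonneg hr.le (by linarith)
      linarith
    · rw [min_eq_left hc'] at hJlb
      have h2 := hJle u' u' le_rfl
      have h3 := hGlip σ u' hσmem.2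
      have h4 : r * (u' - σ) ≤ r * (u' - u) := by
        apply mul_le_mul_of_nonneg_left _ hr.le
        linarith [hσmem.1]
      linarith
  have hJ0 : J 0 ≤ 0 := by
    have h := hJle 0 0 le_rfl
    have hG0 : G 0 = 0 := by
      simp only [hG]
      exact intervalIntegral.integral_same
    linarith
  -- now fix t
  intro t ht
  have ht0 : 0 ≤ t := le_trans hTp0 ht
  have hJt : (p - q) * St * t ≤ J t := by
    rw [hJ t]
    refine le_csInf ⟨G t, t, mem_Ici.2 le_rfl, rfl⟩ ?_
    rintro y ⟨s, hs, rfl⟩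
    have hts : t ≤ s := hs
    have hgl := hGlow s (le_trans ht hts)
    nlinarith [mul_nonneg (mul_nonneg (by linarith : (0:ℝ) ≤ p - q) hStpos.le)
      (by linarith : (0:ℝ) ≤ s - t)]
  -- bound on the integral of f'^2
  have hI3nn : 0 ≤ ∫ v in (0:ℝ)..t, |deriv (deriv f) v| :=
    intervalIntegral.integral_nonneg ht0 (fun x _ => abs_nonneg _)
  have hIf2 : (∫ v in (0:ℝ)..t, (deriv f v) ^ 2) ≤ 2 * r * t := by
    have h := hTpmem t ht
    have hsp := hsplit t
    have habs : 0 ≤ 2 * L * |deriv f 0| := by positivity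
    have hpStt : 0 ≤ p * St * t := mul_nonneg (mul_nonneg hppos.le hStpos.le) ht0
    nlinarith [mul_nonneg hA0 ht0, mul_nonneg hL.le hI3nn]
  -- measure of the bad set E
  set E : Set ℝ := Ioc 0 t ∩ {x | c ≤ |deriv f x|} with hE
  have hEm : MeasurableSet E := measurableSet_Ioc.inter
    ((isClosed_le continuous_const hc1.abs).measurableSet)
  have hEfin : volume E ≠ ⊤ :=
    ne_top_of_le_ne_top (by rw [Real.volume_Ioc]; exact ENNReal.ofReal_ne_top)
      (measure_mono inter_subset_left)
  have hcsq : c ^ 2 * (q * St) = 2 * r ^ 2 := by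
    rw [hcdef, mul_pow, Real.sq_sqrt (le_of_lt (div_pos two_pos (mul_pos hq hStpos)))]
    field_simp
  have hint2 : IntegrableOn (fun x => (deriv f x) ^ 2) (Ioc 0 t) volume :=
    (hc1.pow 2).integrableOn_Ioc
  have hlowE : ∀ x ∈ E, c ^ 2 ≤ (deriv f x) ^ 2 := by
    intro x hx
    calc c ^ 2 ≤ |deriv f x| ^ 2 := pow_le_pow_left₀ hc0 hx.2 2
      _ = (deriv f x) ^ 2 := sq_abs _
  have hgeE := setIntegral_ge_of_const_le hEm hEfin hlowE (hint2.mono_set inter_subset_left)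
  have hleE : (∫ x in E, (deriv f x) ^ 2) ≤ ∫ x in Ioc 0 t, (deriv f x) ^ 2 :=
    setIntegral_mono_set hint2 (Filter.Eventually.of_forall (fun x => sq_nonneg _))
      (HasSubset.Subset.eventuallyLE inter_subset_left)
  have hIoc : (∫ x in Ioc 0 t, (deriv f x) ^ 2) = ∫ v in (0:ℝ)..t, (deriv f v) ^ 2 :=
    (intervalIntegral.integral_of_le ht0).symm
  have hm0 : (0:ℝ) ≤ (volume E).toReal := ENNReal.toReal_nonneg
  have h5 : c ^ 2 * (volume E).toReal ≤ 2 * r * t := by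
    rw [hIoc] at hleE
    rw [smul_eq_mul, measureReal_def] at hgeE
    linarith
  have h6 : 2 * r ^ 2 * (volume E).toReal ≤ 2 * r * t * (q * St) := by
    nlinarith [mul_le_mul_of_nonneg_right h5 (mul_pos hq hStpos).le, hcsq, hm0]
  have hmle : (volume E).toReal ≤ q * St * t / r := by
    rw [le_div_iff₀ hr]
    nlinarith [h6, hr]
  have hEvol : volume E ≤ ENNReal.ofReal (q * St * t / r) := by
    rw [← ENNReal.ofReal_toReal hEfin]
    exact ENNReal.ofReal_le_ofReal hmle
  -- final assembly
  have hstep := stieltjes_aux r hr J hmonoJ hJlip t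
  rw [← hU] at hstep
  have h1' : ENNReal.ofReal ((p - q) * St * t) ≤ ENNReal.ofReal r * volume (U ∩ Icc 0 t) :=
    le_trans (ENNReal.ofReal_le_ofReal (by linarith)) hstep
  have hsubdiff : (U ∩ Icc 0 t) \ V ⊆ E ∪ {0} := by
    rintro x ⟨⟨hxU, hxI⟩, hxV⟩
    rw [hV] at hxV
    simp only [mem_setOf_eq, not_and, not_lt] at hxV
    have hcx : c ≤ |deriv f x| := hxV hxI.1
    rcases eq_or_lt_of_le hxI.1 with h0 | h0
    · exact Or.inr (by simp [← h0])
    · exact Or.inl ⟨⟨h0, hxI.2⟩, hcx⟩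
  have hvol1 : volume (U ∩ Icc 0 t) ≤ volume (U ∩ V ∩ Icc 0 t) + volume E := by
    calc volume (U ∩ Icc 0 t)
        ≤ volume ((U ∩ Icc 0 t) ∩ V) + volume ((U ∩ Icc 0 t) \ V) :=
          measure_le_inter_add_diff _ _ _
      _ ≤ volume (U ∩ V ∩ Icc 0 t) + volume E := by
          refine add_le_add (le_of_eq (by rw [inter_right_comm])) ?_
          calc volume ((U ∩ Icc 0 t) \ V) ≤ volume (E ∪ {0}) := measure_mono hsubdiff
            _ ≤ volume E + volume ({0} : Set ℝ) := measure_union_le _ _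
            _ = volume E := by rw [Real.volume_singleton, add_zero]
  have hq0t : (0:ℝ) ≤ q * St * t := mul_nonneg (mul_nonneg hq.le hStpos.le) ht0
  have hp2q0t : (0:ℝ) ≤ (p - 2 * q) * St * t :=
    mul_nonneg (mul_nonneg (by linarith) hStpos.le) ht0
  have hfinal : ENNReal.ofReal ((p - 2 * q) * St * t) + ENNReal.ofReal (q * St * t)
      ≤ ENNReal.ofReal r * volume (U ∩ V ∩ Icc 0 t) + ENNReal.ofReal (q * St * t) := by
    calc ENNReal.ofReal ((p - 2 * q) * St * t) + ENNReal.ofReal (q * St * t)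
        = ENNReal.ofReal ((p - q) * St * t) := by
          rw [← ENNReal.ofReal_add hp2q0t hq0t]
          congr 1
          ring
      _ ≤ ENNReal.ofReal r * volume (U ∩ Icc 0 t) := h1'
      _ ≤ ENNReal.ofReal r * (volume (U ∩ V ∩ Icc 0 t) + volume E) :=
          mul_le_mul_right hvol1 _
      _ = ENNReal.ofReal r * volume (U ∩ V ∩ Icc 0 t) + ENNReal.ofReal r * volume E := by
          rw [mul_add]
      _ ≤ ENNReal.ofReal r * volume (U ∩ V ∩ Icc 0 t)
            + ENNReal.ofReal r * ENNReal.ofReal (q * St * t / r) :=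
          add_le_add le_rfl (mul_le_mul_right hEvol _)
      _ = ENNReal.ofReal r * volume (U ∩ V ∩ Icc 0 t) + ENNReal.ofReal (q * St * t) := by
          rw [← ENNReal.ofReal_mul hr.le]
          congr 2
          field_simp
  have hfinal2 : ENNReal.ofReal ((p - 2 * q) * St * t)
      ≤ ENNReal.ofReal r * volume (U ∩ V ∩ Icc 0 t) :=
    (ENNReal.add_le_add_iff_right ENNReal.ofReal_ne_top).1 hfinal
  refine (ENNReal.mul_le_mul_iff_right (a := ENNReal.ofReal r)
    (ne_of_gt (ENNReal.ofReal_pos.2 hr)) ENNReal.ofReal_ne_top).1 ?_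
  calc ENNReal.ofReal r * ENNReal.ofReal ((p - 2 * q) * (St / r) * t)
      = ENNReal.ofReal ((p - 2 * q) * St * t) := by
        rw [← ENNReal.ofReal_mul hr.le]
        congr 1
        field_simp
    _ ≤ _ := hfinal2
end

section
/- Let (Ω, F, (F_t)_{t≥0}, P) be a filtered probability space with F = σ(⋃_t F_t), let z > 0, let (Z_t)_{t≥0} be a càdlàg nonnegative P-martingale with Z_0 = z almost surely, and let Q be a probability measure on (Ω, F) such that Q restricted to F_t equals (Z_t/z)·P restricted to F_t for every t ≥ 0. Then: (i) for every t ∈ [0,∞), P(Z_t > 0) = E_Q[ z/Z_t ]; and (ii) P( lim_{t→∞} Z_t > 0 ) = E_Q[ z/Z_∞ ], where Z_∞ := limsup_{t→∞} Z_t ∈ [0,∞] and the convention z/∞ = 0 is used. -/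
open MeasureTheory Filter NNReal
open scoped ENNReal Topology

section SurvivalAuxSec
open ENNReal Set

namespace SurvivalAux

variable {Ω : Type*} {a b : ℝ} {f : ℕ → Ω → ℝ} {N n m : ℕ} {ω : Ω}

/-- Nonstrict version of `upcrossingsBefore_lt_of_exists_upcrossing`. -/
theorem upcrossingsBefore_lt_of_exists_upcrossing' (hab : a < b) {N₁ N₂ : ℕ} (hN₁ : N ≤ N₁)
    (hN₁' : f N₁ ω ≤ a) (hN₂ : N₁ ≤ N₂) (hN₂' : b ≤ f N₂ ω) :
    upcrossingsBefore a b f N ω < upcrossingsBefore a b f (N₂ + 1) ω := by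
  refine lt_of_lt_of_le (Nat.lt_succ_self _) (le_csSup (upperCrossingTime_lt_bddAbove hab) ?_)
  rw [Set.mem_setOf_eq, upperCrossingTime_succ_eq, hittingBtwn_lt_iff _ le_rfl]
  refine ⟨N₂, ⟨?_, Nat.lt_succ_self _⟩, hN₂'⟩
  rw [lowerCrossingTime, hittingBtwn_le_iff_of_lt _ (Nat.lt_succ_self _)]
  refine ⟨N₁, ⟨le_trans ?_ hN₁, hN₂⟩, hN₁'⟩
  by_cases hN : 0 < N
  · have : upperCrossingTime a b f N (upcrossingsBefore a b f N ω) ω < N :=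
      Nat.sSup_mem (upperCrossingTime_lt_nonempty hN) (upperCrossingTime_lt_bddAbove hab)
    rw [upperCrossingTime_eq_upperCrossingTime_of_lt (hN₁.trans (hN₂.trans <| Nat.le_succ _))
      this]
    exact this.le
  · rw [not_lt, Nat.le_zero] at hN
    rw [hN, upcrossingsBefore_zero, upperCrossingTime_zero, Pi.bot_apply, bot_eq_zero']

/-- chain ⇒ many upcrossings, `upcrossingsBefore` version. -/
theorem le_upcrossingsBefore_of_chain (hab : a < b) (u v : ℕ → ℕ)
    (h1 : ∀ i ≤ m, f (u i) ω ≤ a) (h2 : ∀ i ≤ m, b ≤ f (v i) ω)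
    (h3 : ∀ i ≤ m, u i ≤ v i) (h4 : ∀ i, i < m → v i < u (i + 1)) :
    m + 1 ≤ upcrossingsBefore a b f (v m + 1) ω := by
  induction m with
  | zero =>
      have := upcrossingsBefore_lt_of_exists_upcrossing' (N := 0) hab (Nat.zero_le (u 0))
        (h1 0 le_rfl) (h3 0 le_rfl) (h2 0 le_rfl)
      simpa [upcrossingsBefore_zero, Nat.one_le_iff_ne_zero, Nat.pos_iff_ne_zero] using this
  | succ k ih =>
      have hk := ih (fun i hi => h1 i (hi.trans (Nat.le_succ _)))
        (fun i hi => h2 i (hi.trans (Nat.le_succ _)))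
        (fun i hi => h3 i (hi.trans (Nat.le_succ _)))
        (fun i hi => h4 i (hi.trans_le (Nat.le_succ _)))
      have hstep := upcrossingsBefore_lt_of_exists_upcrossing' (N := v k + 1) hab
        (h4 k (Nat.lt_succ_self _)) (h1 (k + 1) le_rfl) (h3 (k + 1) le_rfl) (h2 (k + 1) le_rfl)
      omega

/-- chain ⇒ many upcrossings. -/
theorem le_upcrossings_of_chain (hab : a < b) (u v : ℕ → ℕ)
    (h1 : ∀ i < m, f (u i) ω ≤ a) (h2 : ∀ i < m, b ≤ f (v i) ω)
    (h3 : ∀ i < m, u i ≤ v i) (h4 : ∀ i, i + 1 < m → v i < u (i + 1)) :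
    (m : ℝ≥0∞) ≤ upcrossings a b f ω := by
  rcases Nat.eq_zero_or_pos m with hm | hm
  · simp [hm]
  · obtain ⟨k, rfl⟩ : ∃ k, m = k + 1 := ⟨m - 1, (Nat.succ_pred_eq_of_pos hm).symm⟩
    have := le_upcrossingsBefore_of_chain (m := k) hab u v
      (fun i hi => h1 i (Nat.lt_succ_of_le hi)) (fun i hi => h2 i (Nat.lt_succ_of_le hi))
      (fun i hi => h3 i (Nat.lt_succ_of_le hi)) (fun i hi => h4 i (Nat.succ_lt_succ hi))
    calc ((k + 1 : ℕ) : ℝ≥0∞) ≤ (upcrossingsBefore a b f (v k + 1) ω : ℝ≥0∞) := by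
          exact_mod_cast this
      _ ≤ upcrossings a b f ω := le_iSup (fun N => (upcrossingsBefore a b f N ω : ℝ≥0∞)) _

/-- many upcrossings ⇒ chain. -/
theorem exists_chain_of_le_upcrossingsBefore (hab : a < b) (hN : 0 < N)
    (hm : m ≤ upcrossingsBefore a b f N ω) :
    ∃ u v : ℕ → ℕ, (∀ i < m, f (u i) ω ≤ a) ∧ (∀ i < m, b ≤ f (v i) ω) ∧
      (∀ i < m, u i ≤ v i) ∧ (∀ i, i + 1 < m → v i < u (i + 1)) := by
  refine ⟨fun i => lowerCrossingTime a b f N i ω, fun i => upperCrossingTime a b f N (i + 1) ω,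
    fun i hi => ?_, fun i hi => ?_, fun i hi => ?_, fun i hi => ?_⟩
  · exact stoppedValue_lowerCrossingTime
      (lowerCrossingTime_lt_of_lt_upcrossingsBefore hN hab (hi.trans_le hm)).ne
  · exact stoppedValue_upperCrossingTime
      (upperCrossingTime_lt_of_le_upcrossingsBefore hN hab ((Nat.succ_le_of_lt hi).trans hm)).ne
  · exact lowerCrossingTime_le_upperCrossingTime_succ
  · exact upperCrossingTime_lt_lowerCrossingTime hab
      (lowerCrossingTime_lt_of_lt_upcrossingsBefore hN hab (hi.trans_le hm)).ne

/-- upcrossings of a subsequence along a strictly monotone map are at most the upcrossings. -/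
theorem upcrossings_comp_le (hab : a < b) (φ : ℕ → ℕ) (hφ : StrictMono φ) :
    upcrossings a b (fun i ω => f (φ i) ω) ω ≤ upcrossings a b f ω := by
  refine iSup_le fun N => ?_
  rcases Nat.eq_zero_or_pos N with hN | hN
  · simp [hN]
  obtain ⟨u, v, h1, h2, h3, h4⟩ := exists_chain_of_le_upcrossingsBefore
    (f := fun i ω => f (φ i) ω) hab hN le_rfl
  exact le_upcrossings_of_chain hab (φ ∘ u) (φ ∘ v) (fun i hi => h1 i hi) (fun i hi => h2 i hi)
    (fun i hi => hφ.monotone (h3 i hi)) (fun i hi => hφ (h4 i hi))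




/-- dyadic numbers -/
noncomputable def D (k i : ℕ) : ℝ≥0 := (i : ℝ≥0) / 2 ^ k

lemma two_pow_pos {k : ℕ} : (0 : ℝ≥0) < 2 ^ k := pow_pos two_pos k

lemma D_strictMono (k : ℕ) : StrictMono (D k) := fun i j hij => by
  unfold D
  exact div_lt_div_of_pos_right (by exact_mod_cast hij) two_pow_pos

lemma D_nat (k n : ℕ) : D k (n * 2 ^ k) = (n : ℝ≥0) := by
  unfold D
  push_cast
  exact mul_div_cancel_right₀ _ two_pow_pos.ne'

lemma D_succ (k i : ℕ) : D (k + 1) (2 * i) = D k i := by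
  unfold D
  push_cast
  rw [pow_succ, mul_comm ((2:ℝ≥0)^k) 2, ← div_div]
  congr 1
  rw [mul_comm, mul_div_assoc, div_self (two_ne_zero), mul_one]

lemma D_lift {k K : ℕ} (hkK : k ≤ K) (j : ℕ) : D K (j * 2 ^ (K - k)) = D k j := by
  unfold D
  push_cast
  rw [show (2:ℝ≥0) ^ K = 2 ^ (K - k) * 2 ^ k by rw [← pow_add]; congr 1; omega,
    mul_comm ((j:ℝ≥0)) (2 ^ (K - k) : ℝ≥0), mul_div_mul_left _ _ (two_pow_pos (k := K - k)).ne']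



end SurvivalAux

end SurvivalAuxSec

/-- If `Z` is a càdlàg nonnegative `P`-martingale with `Z 0 = z > 0` and
`Q` restricted to `ℱ t` equals `(Z t / z) • P` for every `t`, then
(i) `P(Z t > 0) = E_Q[z / Z t]` for every finite `t`, and
(ii) `P(lim Z t > 0) = E_Q[z / Z∞]` where `Z∞ = limsup Z t` (with `z/∞ = 0`). -/
theorem survival_identity {Ω : Type*} {m : MeasurableSpace Ω} (P Q : Measure Ω)
    [IsProbabilityMeasure P] [IsProbabilityMeasure Q]
    (ℱ : Filtration ℝ≥0 m) (hm : (⨆ t : ℝ≥0, (ℱ t : MeasurableSpace Ω)) = m)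
    (z : ℝ) (hz : 0 < z) (Z : ℝ≥0 → Ω → ℝ)
    (hmart : Martingale Z ℱ P)
    (hpos : ∀ t : ℝ≥0, ∀ᵐ ω ∂P, 0 ≤ Z t ω)
    (hcadlag : ∀ᵐ ω ∂P, ∀ t : ℝ≥0,
      ContinuousWithinAt (fun s => Z s ω) (Set.Ici t) t ∧
      ∃ l : ℝ, Tendsto (fun s => Z s ω) (nhdsWithin t (Set.Iio t)) (nhds l))
    (hZ0 : ∀ᵐ ω ∂P, Z 0 ω = z)
    (hQ : ∀ (t : ℝ≥0) (A : Set Ω), MeasurableSet[ℱ t] A →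
      Q A = ∫⁻ ω in A, ENNReal.ofReal (Z t ω / z) ∂P) :
    (∀ t : ℝ≥0, P {ω | 0 < Z t ω} = ∫⁻ ω, ENNReal.ofReal (z / Z t ω) ∂Q) ∧
    P {ω | 0 < limsup (fun t : ℝ≥0 => ENNReal.ofReal (Z t ω)) atTop}
      = ∫⁻ ω, ENNReal.ofReal z
          / limsup (fun t : ℝ≥0 => ENNReal.ofReal (Z t ω)) atTop ∂Q := by
  have hZm : ∀ t : ℝ≥0, Measurable (Z t) := fun t =>
    (hmart.stronglyAdapted t).measurable.mono (ℱ.le t) le_rfl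
  have hintZ : ∀ t : ℝ≥0, ∫ ω, Z t ω ∂P = z := by
    intro t
    have h0 : ∫ ω, Z 0 ω ∂P = z := by
      rw [integral_congr_ae hZ0]; simp
    rw [← h0]
    have h := hmart.setIntegral_eq (zero_le : 0 ≤ t) (MeasurableSet.univ)
    simpa using h.symm
  have hlintZ : ∀ t : ℝ≥0, ∫⁻ ω, ENNReal.ofReal (Z t ω) ∂P = ENNReal.ofReal z := fun t => by
    rw [← ofReal_integral_eq_lintegral_ofReal (hmart.integrable t) (hpos t), hintZ t]
  -- Part (i)
  have part1 : ∀ t : ℝ≥0, P {ω | 0 < Z t ω} = ∫⁻ ω, ENNReal.ofReal (z / Z t ω) ∂Q := by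
    intro t
    have hfm : Measurable[ℱ t] fun ω => ENNReal.ofReal (z / Z t ω) :=
      (measurable_const.div (hmart.stronglyAdapted t).measurable).ennreal_ofReal
    have hgm : Measurable fun ω => ENNReal.ofReal (Z t ω / z) :=
      ((hZm t).div_const z).ennreal_ofReal
    have htrim : Q.trim (ℱ.le t)
        = (P.withDensity fun ω => ENNReal.ofReal (Z t ω / z)).trim (ℱ.le t) := by
      refine @Measure.ext _ (ℱ t) _ _ fun s hs => ?_
      rw [trim_measurableSet_eq _ hs, trim_measurableSet_eq _ hs, hQ t s hs,
        withDensity_apply _ (ℱ.le t s hs)]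
    have h1 : ∫⁻ ω, ENNReal.ofReal (z / Z t ω) ∂Q
        = ∫⁻ ω, ENNReal.ofReal (z / Z t ω)
            ∂(P.withDensity fun ω => ENNReal.ofReal (Z t ω / z)) := by
      rw [← lintegral_trim (ℱ.le t) hfm, ← lintegral_trim (ℱ.le t) hfm, htrim]
    rw [h1, lintegral_withDensity_eq_lintegral_mul _ hgm (hfm.mono (ℱ.le t) le_rfl)]
    have hae : (fun ω => ((fun ω => ENNReal.ofReal (Z t ω / z))
          * fun ω => ENNReal.ofReal (z / Z t ω)) ω)
        =ᵐ[P] fun ω => Set.indicator {ω | 0 < Z t ω} (fun _ => (1 : ℝ≥0∞)) ω := by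
      filter_upwards [hpos t] with ω hω
      rcases hω.eq_or_lt with h | h
      · simp [Pi.mul_apply, ← h, Set.indicator_of_notMem, lt_irrefl]
      · rw [Set.indicator_of_mem (by exact h)]
        simp only [Pi.mul_apply]
        rw [← ENNReal.ofReal_mul (div_nonneg hω hz.le)]
        rw [div_mul_div_comm, mul_comm, div_self (by positivity), ENNReal.ofReal_one]
    rw [lintegral_congr_ae hae]
    exact (lintegral_indicator_one ((hZm t) measurableSet_Ioi)).symm
  refine ⟨part1, ?_⟩
  -- notation
  set L : Ω → ℝ≥0∞ := fun ω => limsup (fun n : ℕ => ENNReal.ofReal (Z n ω)) atTop with hLdef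
  set W : Ω → ℝ≥0∞ := fun ω => limsup (fun t : ℝ≥0 => ENNReal.ofReal (Z t ω)) atTop with hWdef
  have hLmeas : Measurable L := by
    apply Measurable.limsup
    exact fun n => (hZm n).ennreal_ofReal
  -- W dominates L pointwise
  have hWgeL : ∀ ω, L ω ≤ W ω := by
    intro ω
    have hmap : (atTop : Filter ℕ).map ((↑) : ℕ → ℝ≥0) ≤ (atTop : Filter ℝ≥0) :=
      tendsto_natCast_atTop_atTop
    have : L ω = Filter.limsSup
        ((atTop : Filter ℕ).map (fun n : ℕ => ENNReal.ofReal (Z n ω))) := rfl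
    rw [this, show (fun n : ℕ => ENNReal.ofReal (Z n ω))
        = (fun t : ℝ≥0 => ENNReal.ofReal (Z t ω)) ∘ ((↑) : ℕ → ℝ≥0) from rfl,
      ← Filter.map_map]
    exact Filter.limsSup_le_limsSup_of_le (Filter.map_mono hmap)
  -- discrete-time martingale
  set G : Filtration ℕ m :=
    ⟨fun n => ℱ n, fun i j hij => ℱ.mono (by exact_mod_cast hij), fun n => ℱ.le n⟩ with hGdef
  have hmartN : Martingale (fun n : ℕ => Z n) G P :=
    ⟨fun n => hmart.stronglyAdapted n, fun i j hij => hmart.2 i j (by exact_mod_cast hij)⟩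
  have hbdd : ∀ t : ℝ≥0, eLpNorm (Z t) 1 P ≤ ((z.toNNReal : ℝ≥0) : ℝ≥0∞) := by
    intro t
    rw [eLpNorm_one_eq_lintegral_enorm]
    have : ∫⁻ ω, ‖Z t ω‖ₑ ∂P = ∫⁻ ω, ENNReal.ofReal (Z t ω) ∂P := by
      refine lintegral_congr_ae ?_
      filter_upwards [hpos t] with ω hω
      exact Real.enorm_eq_ofReal hω
    rw [this, hlintZ t]
    exact le_rfl
  have hLlim : ∀ᵐ ω ∂P, Tendsto (fun n : ℕ => Z n ω) atTop
      (𝓝 (G.limitProcess (fun n : ℕ => Z n) P ω)) :=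
    hmartN.submartingale.ae_tendsto_limitProcess fun n => hbdd n
  have hLconv : ∀ᵐ ω ∂P, Tendsto (fun n : ℕ => ENNReal.ofReal (Z n ω)) atTop (𝓝 (L ω))
      ∧ L ω < ∞ := by
    filter_upwards [hLlim] with ω hω
    have h2 : Tendsto (fun n : ℕ => ENNReal.ofReal (Z n ω)) atTop
        (𝓝 (ENNReal.ofReal (G.limitProcess (fun n : ℕ => Z n) P ω))) :=
      (ENNReal.continuous_ofReal.tendsto _).comp hω
    have hL : L ω = ENNReal.ofReal (G.limitProcess (fun n : ℕ => Z n) P ω) := h2.limsup_eq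
    rw [hL]
    exact ⟨h2, ENNReal.ofReal_lt_top⟩
  -- the sets where the discrete skeleton stays bounded
  set Cs : ℕ → Set Ω := fun k => {ω | ∀ n : ℕ, k ≤ n → Z n ω ≤ k} with hCdef
  set S : Set Ω := {ω | L ω < ∞} with hSdef
  have hSmeas : MeasurableSet S := hLmeas measurableSet_Iio
  have hCmeas : ∀ k, MeasurableSet (Cs k) := by
    intro k
    have : Cs k = ⋂ (n : ℕ) (_ : k ≤ n), Z n ⁻¹' Set.Iic (k : ℝ) := by
      ext ω; simp [hCdef, Set.mem_iInter]
    rw [this]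
    exact MeasurableSet.iInter fun n => MeasurableSet.iInter fun _ =>
      (hZm n) measurableSet_Iic
  have hCmono : Monotone Cs := by
    intro i j hij ω hω n hn
    exact le_trans (hω n (le_trans hij hn)) (by exact_mod_cast hij)
  have hSC : S = ⋃ k, Cs k := by
    ext ω
    constructor
    · intro hω
      obtain ⟨cn, hcn⟩ := ENNReal.exists_nat_gt hω.ne
      have hev : ∀ᶠ n : ℕ in atTop, ENNReal.ofReal (Z n ω) < (cn : ℝ≥0∞) :=
        Filter.eventually_lt_of_limsup_lt hcn
      obtain ⟨mN, hmN⟩ := Filter.eventually_atTop.1 hev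
      refine Set.mem_iUnion.2 ⟨max mN cn, fun n hn => ?_⟩
      have h1 : ENNReal.ofReal (Z n ω) < ((cn : ℕ) : ℝ≥0∞) :=
        hmN n (le_trans (le_max_left _ _) hn)
      have h2 : Z n ω ≤ (cn : ℝ) := by
        by_contra hcon
        push_neg at hcon
        have : ((cn : ℕ) : ℝ≥0∞) ≤ ENNReal.ofReal (Z n ω) := by
          rw [← ENNReal.ofReal_natCast cn]
          exact ENNReal.ofReal_le_ofReal hcon.le
        exact absurd h1 (not_lt.2 this)
      calc Z n ω ≤ (cn : ℝ) := h2
        _ ≤ ((max mN cn : ℕ) : ℝ) := by exact_mod_cast le_max_right mN cn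
    · intro hω
      obtain ⟨k, hk⟩ := Set.mem_iUnion.1 hω
      have : L ω ≤ ((k : ℕ) : ℝ≥0∞) := by
        simp only [hLdef]
        rw [Filter.limsup_eq]
        refine sInf_le ?_
        filter_upwards [Filter.eventually_ge_atTop k] with n hn
        rw [← ENNReal.ofReal_natCast k]
        exact ENNReal.ofReal_le_ofReal (hk n hn)
      exact lt_of_le_of_lt this (ENNReal.natCast_lt_top k)
  -- the candidate density measure
  set μd : Measure Ω := P.withDensity (fun ω => L ω / ENNReal.ofReal z) with hμdef
  have hdensmeas : Measurable fun ω => L ω / ENNReal.ofReal z :=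
    hLmeas.div measurable_const
  have hLint : ∫⁻ ω, L ω ∂P ≤ ENNReal.ofReal z := by
    have hae : L =ᵐ[P] fun ω => liminf (fun n : ℕ => ENNReal.ofReal (Z n ω)) atTop := by
      filter_upwards [hLconv] with ω hω
      exact (hω.1.liminf_eq).symm
    rw [lintegral_congr_ae hae]
    refine le_trans (lintegral_liminf_le fun n => (hZm n).ennreal_ofReal) ?_
    simp_rw [hlintZ]
    simp
  have hμfin : IsFiniteMeasure μd := by
    constructor
    rw [hμdef, withDensity_apply _ MeasurableSet.univ, Measure.restrict_univ]
    calc ∫⁻ ω, L ω / ENNReal.ofReal z ∂P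
        = (∫⁻ ω, L ω ∂P) * (ENNReal.ofReal z)⁻¹ := by
          simp_rw [div_eq_mul_inv]
          exact lintegral_mul_const' _ _ (by simp [ENNReal.inv_ne_top, (ENNReal.ofReal_pos.2 hz).ne'])
      _ ≤ ENNReal.ofReal z * (ENNReal.ofReal z)⁻¹ :=
          mul_le_mul_left hLint _
      _ < ∞ := by
          rw [ENNReal.mul_inv_cancel (ENNReal.ofReal_pos.2 hz).ne' ENNReal.ofReal_ne_top]
          exact ENNReal.one_lt_top
  -- `Q` agrees with `μd` on `A ∩ Cs k` for `A` in any `ℱ t`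
  have hQC : ∀ (t : ℝ≥0) (A : Set Ω), MeasurableSet[ℱ t] A → ∀ k : ℕ,
      Q (A ∩ Cs k) = μd (A ∩ Cs k) := by
    intro t A hA k
    set Bs : ℕ → Set Ω := fun N => {ω | ∀ n : ℕ, k ≤ n → n ≤ k + N → Z n ω ≤ k} with hBdef
    have hBF : ∀ N : ℕ, MeasurableSet[ℱ ((k + N : ℕ) : ℝ≥0)] (Bs N) := by
      intro N
      have : Bs N = ⋂ (n : ℕ) (_ : k ≤ n) (_ : n ≤ k + N), Z n ⁻¹' Set.Iic (k : ℝ) := by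
        ext ω; simp [hBdef, Set.mem_iInter]
      rw [this]
      refine MeasurableSet.iInter fun n => MeasurableSet.iInter fun _ =>
        MeasurableSet.iInter fun hn => ?_
      exact ℱ.mono (show (n : ℝ≥0) ≤ ((k + N : ℕ) : ℝ≥0) by exact_mod_cast hn) _
        ((hmart.stronglyAdapted n).measurable measurableSet_Iic)
    have hBm : ∀ N, MeasurableSet (Bs N) := fun N => ℱ.le _ _ (hBF N)
    have hBanti : Antitone Bs := by
      intro i j hij ω hω n hn1 hn2
      exact hω n hn1 (hn2.trans (by omega))
    have hBC : ⋂ N, Bs N = Cs k := by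
      ext ω
      simp only [Set.mem_iInter, hBdef, hCdef, Set.mem_setOf_eq]
      constructor
      · intro h n hn
        exact h n n hn (by omega)
      · intro h N n hn _
        exact h n hn
    have hABm : ∀ N, MeasurableSet (A ∩ Bs N) := fun N => (ℱ.le t _ hA).inter (hBm N)
    have htQ : Tendsto (fun N => Q (A ∩ Bs N)) atTop (𝓝 (Q (A ∩ Cs k))) := by
      have := MeasureTheory.tendsto_measure_iInter_atTop (μ := Q) (s := fun N => A ∩ Bs N)
        (fun N => (hABm N).nullMeasurableSet)
        (fun i j hij => Set.inter_subset_inter_right _ (hBanti hij))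
        ⟨0, measure_ne_top _ _⟩
      rwa [← Set.inter_iInter, hBC] at this
    -- the dominated convergence computation
    set F : ℕ → Ω → ℝ≥0∞ := fun N ω => Set.indicator (A ∩ Bs N)
      (fun ω => ENNReal.ofReal (Z ((k + N : ℕ) : ℝ≥0) ω / z)) ω with hFdef
    have hFmeas : ∀ N, Measurable (F N) := fun N =>
      (((hZm _).div_const z).ennreal_ofReal).indicator (hABm N)
    have htI : Tendsto (fun N => ∫⁻ ω, F N ω ∂P) atTop
        (𝓝 (∫⁻ ω, Set.indicator (A ∩ Cs k) (fun ω => L ω / ENNReal.ofReal z) ω ∂P)) := by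
      refine tendsto_lintegral_of_dominated_convergence
        (fun _ => ENNReal.ofReal ((k : ℝ) / z)) hFmeas ?_ (by simp) ?_
      · intro N
        refine ae_of_all _ fun ω => ?_
        by_cases hω : ω ∈ A ∩ Bs N
        · rw [hFdef]
          simp only [Set.indicator_of_mem hω]
          refine ENNReal.ofReal_le_ofReal ((div_le_div_iff_of_pos_right hz).2 ?_)
          exact hω.2 (k + N) (by omega) (by omega)
        · simp [hFdef, Set.indicator_of_notMem hω]
      · filter_upwards [hLconv] with ω hω
        by_cases hωA : ω ∈ A
        · by_cases hωC : ω ∈ Cs k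
          · have hmem : ∀ N, ω ∈ A ∩ Bs N := by
              intro N
              exact Set.mem_inter hωA (fun n hn _ => hωC n hn)
            have hval : ∀ N, F N ω = ENNReal.ofReal (Z ((k + N : ℕ) : ℝ≥0) ω / z) := by
              intro N; rw [hFdef]; simp only [Set.indicator_of_mem (hmem N)]
            rw [Set.indicator_of_mem (Set.mem_inter hωA hωC)]
            have hdiv : Tendsto (fun n : ℕ => ENNReal.ofReal (Z n ω / z)) atTop
                (𝓝 (L ω / ENNReal.ofReal z)) := by
              have : (fun n : ℕ => ENNReal.ofReal (Z n ω / z))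
                  = fun n : ℕ => ENNReal.ofReal (Z n ω) / ENNReal.ofReal z := by
                funext n; exact ENNReal.ofReal_div_of_pos hz
              rw [this]
              exact ENNReal.Tendsto.div_const hω.1 (Or.inr (ENNReal.ofReal_pos.2 hz).ne')
            have hsub : Tendsto (fun N : ℕ => ENNReal.ofReal (Z ((k + N : ℕ) : ℝ≥0) ω / z))
                atTop (𝓝 (L ω / ENNReal.ofReal z)) := by
              have hshift : Tendsto (fun N : ℕ => k + N) atTop atTop := by
                simpa [add_comm] using tendsto_add_atTop_nat k
              exact hdiv.comp hshift
            exact Tendsto.congr (fun N => (hval N).symm) hsub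
          · -- eventually zero
            rw [Set.indicator_of_notMem (fun h => hωC h.2)]
            obtain ⟨n₀, hn₀k, hn₀⟩ : ∃ n₀, k ≤ n₀ ∧ ¬ Z n₀ ω ≤ k := by
              by_contra hcon
              push_neg at hcon
              exact hωC fun n hn => hcon n hn
            have hev : ∀ᶠ N in atTop, F N ω = 0 := by
              filter_upwards [Filter.eventually_ge_atTop (n₀ - k)] with N hN
              have : ω ∉ Bs N := fun hB => hn₀ (hB n₀ hn₀k (by omega))
              rw [hFdef]
              exact Set.indicator_of_notMem (fun h => this h.2) _
            exact Tendsto.congr' (hev.mono fun N h => h.symm) tendsto_const_nhds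
        · rw [Set.indicator_of_notMem (fun h => hωA h.1)]
          have : ∀ N, F N ω = 0 := fun N => Set.indicator_of_notMem (fun h => hωA h.1) _
          exact Tendsto.congr (fun N => (this N).symm) tendsto_const_nhds
    have hQeq : ∀ᶠ N : ℕ in atTop, Q (A ∩ Bs N) = ∫⁻ ω, F N ω ∂P := by
      obtain ⟨Nt, hNt⟩ := exists_nat_ge t
      filter_upwards [Filter.eventually_ge_atTop Nt] with N hN
      have htle : t ≤ ((k + N : ℕ) : ℝ≥0) := le_trans hNt (by exact_mod_cast by omega)
      have hABF : MeasurableSet[ℱ ((k + N : ℕ) : ℝ≥0)] (A ∩ Bs N) :=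
        (ℱ.mono htle _ hA).inter (hBF N)
      rw [hQ _ _ hABF, hFdef, lintegral_indicator (hABm N)]
    have h2 : Tendsto (fun N => Q (A ∩ Bs N)) atTop
        (𝓝 (∫⁻ ω, Set.indicator (A ∩ Cs k) (fun ω => L ω / ENNReal.ofReal z) ω ∂P)) :=
      htI.congr' (hQeq.mono fun N h => h.symm)
    have := tendsto_nhds_unique htQ h2
    rw [this, hμdef, withDensity_apply _ ((ℱ.le t _ hA).inter (hCmeas k)),
      lintegral_indicator ((ℱ.le t _ hA).inter (hCmeas k))]
  -- pass to the union over k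
  have hQS : ∀ (t : ℝ≥0) (A : Set Ω), MeasurableSet[ℱ t] A → Q (A ∩ S) = μd (A ∩ S) := by
    intro t A hA
    have hmonoAC : Monotone fun k => A ∩ Cs k :=
      fun i j hij => Set.inter_subset_inter_right _ (hCmono hij)
    have hQt : Tendsto (fun k => Q (A ∩ Cs k)) atTop (𝓝 (Q (A ∩ S))) := by
      have := MeasureTheory.tendsto_measure_iUnion_atTop (μ := Q) hmonoAC
      rwa [← Set.inter_iUnion, ← hSC] at this
    have hμt : Tendsto (fun k => μd (A ∩ Cs k)) atTop (𝓝 (μd (A ∩ S))) := by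
      have := MeasureTheory.tendsto_measure_iUnion_atTop (μ := μd) hmonoAC
      rwa [← Set.inter_iUnion, ← hSC] at this
    exact tendsto_nhds_unique (hQt.congr fun k => hQC t A hA k) hμt
  -- π-system extension
  have hrS : Q.restrict S = μd.restrict S := by
    have hQSfin : IsFiniteMeasure (Q.restrict S) := inferInstance
    refine MeasureTheory.ext_of_generate_finite
      (⋃ t : ℝ≥0, {A : Set Ω | MeasurableSet[ℱ t] A}) ?_ ?_ ?_ ?_
    · have hg := MeasurableSpace.generateFrom_iUnion_measurableSet (fun t : ℝ≥0 => (ℱ t : MeasurableSpace Ω))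
      rw [hg, hm]
    · rintro A hA B hB -
      obtain ⟨tA, hA⟩ := Set.mem_iUnion.1 hA
      obtain ⟨tB, hB⟩ := Set.mem_iUnion.1 hB
      exact Set.mem_iUnion.2 ⟨tA ⊔ tB,
        (ℱ.mono le_sup_left _ hA).inter (ℱ.mono le_sup_right _ hB)⟩
    · rintro A hA
      obtain ⟨tA, hA⟩ := Set.mem_iUnion.1 hA
      rw [Measure.restrict_apply (ℱ.le tA _ hA), Measure.restrict_apply (ℱ.le tA _ hA)]
      exact hQS tA A hA
    · rw [Measure.restrict_apply_univ, Measure.restrict_apply_univ]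
      have := hQS 0 Set.univ MeasurableSet.univ
      simpa using this
  -- the continuous-time limsup agrees a.e. with the discrete one
  have hWLae : W =ᵐ[P] L := by
    -- dyadic skeleton processes
    set fK : ℕ → ℕ → Ω → ℝ := fun k i ω => Z (SurvivalAux.D k i) ω with hfKdef
    have hsub : ∀ k : ℕ, Submartingale (fK k)
        (⟨fun i => ℱ (SurvivalAux.D k i),
          fun i j hij => ℱ.mono ((SurvivalAux.D_strictMono k).monotone hij),
          fun i => ℱ.le _⟩ : Filtration ℕ m) P :=
      fun k => Martingale.submartingale
        ⟨fun i => hmart.stronglyAdapted _,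
         fun i j hij => hmart.2 _ _ ((SurvivalAux.D_strictMono k).monotone hij)⟩
    have hppb : ∀ (t : ℝ≥0) (a : ℝ), ∫⁻ ω, ENNReal.ofReal ((Z t ω - a)⁺) ∂P
        ≤ ENNReal.ofReal z + ENNReal.ofReal |a| := by
      intro t a
      have hae : ∀ᵐ ω ∂P, ENNReal.ofReal ((Z t ω - a)⁺)
          ≤ ENNReal.ofReal (Z t ω) + ENNReal.ofReal |a| := by
        filter_upwards [hpos t] with ω hω
        have h1 : (Z t ω - a)⁺ ≤ Z t ω + |a| := by
          rcases le_total (Z t ω - a) 0 with h | h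
          · rw [posPart_eq_zero.2 h]; positivity
          · rw [posPart_eq_self.2 h]
            have := neg_abs_le a
            linarith
        calc ENNReal.ofReal ((Z t ω - a)⁺) ≤ ENNReal.ofReal (Z t ω + |a|) :=
              ENNReal.ofReal_le_ofReal h1
          _ = ENNReal.ofReal (Z t ω) + ENNReal.ofReal |a| :=
              ENNReal.ofReal_add hω (abs_nonneg a)
      calc ∫⁻ ω, ENNReal.ofReal ((Z t ω - a)⁺) ∂P
          ≤ ∫⁻ ω, (ENNReal.ofReal (Z t ω) + ENNReal.ofReal |a|) ∂P := lintegral_mono_ae hae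
        _ = ENNReal.ofReal z + ENNReal.ofReal |a| := by
            rw [lintegral_add_right _ measurable_const, hlintZ t, lintegral_const,
              measure_univ, mul_one]
    have hUfin : ∀ a b : ℝ, a < b →
        ∀ᵐ ω ∂P, (⨆ k, upcrossings a b (fK k) ω) < ∞ := by
      intro a b hab
      have hms : ∀ k : ℕ, Measurable fun ω => upcrossings a b (fK k) ω := fun k =>
        StronglyAdapted.measurable_upcrossings (ℱ := (⟨fun i => ℱ (SurvivalAux.D k i),
          fun i j hij => ℱ.mono ((SurvivalAux.D_strictMono k).monotone hij),
          fun i => ℱ.le _⟩ : Filtration ℕ m)) (fun i => hmart.stronglyAdapted _) hab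
      have hmono : Monotone fun k (ω : Ω) => upcrossings a b (fK k) ω := by
        refine monotone_nat_of_le_succ fun k => ?_
        intro ω
        have heq : fK k = fun i ω' => fK (k + 1) (2 * i) ω' := by
          funext i ω'
          simp only [hfKdef, SurvivalAux.D_succ]
        rw [heq]
        exact SurvivalAux.upcrossings_comp_le hab (fun i => 2 * i)
          (fun i j hij => by show 2 * i < 2 * j; omega)
      have hlb : ∫⁻ ω, ⨆ k, upcrossings a b (fK k) ω ∂P
          ≤ (ENNReal.ofReal z + ENNReal.ofReal |a|) / ENNReal.ofReal (b - a) := by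
        rw [lintegral_iSup hms hmono]
        refine iSup_le fun k => ?_
        rw [ENNReal.le_div_iff_mul_le
          (Or.inl (ENNReal.ofReal_pos.2 (sub_pos.2 hab)).ne')
          (Or.inl ENNReal.ofReal_ne_top)]
        rw [mul_comm]
        refine le_trans ((hsub k).mul_lintegral_upcrossings_le_lintegral_pos_part a b) ?_
        exact iSup_le fun N => hppb _ a
      refine ae_lt_top (Measurable.iSup hms) ?_
      refine ne_of_lt (lt_of_le_of_lt hlb ?_)
      exact ENNReal.div_lt_top (by finiteness)
        (ENNReal.ofReal_pos.2 (sub_pos.2 hab)).ne'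
    have hups : ∀ᵐ ω ∂P, ∀ q r : ℚ, (q : ℝ) < (r : ℝ) →
        (⨆ k, upcrossings (q : ℝ) (r : ℝ) (fK k) ω) < ∞ := by
      rw [ae_all_iff]
      intro q
      rw [ae_all_iff]
      intro r
      rw [eventually_imp_distrib_left]
      intro hqr
      exact hUfin _ _ hqr
    have hWle : ∀ᵐ ω ∂P, W ω ≤ L ω := by
      filter_upwards [hcadlag, hups] with ω hrc hfin
      by_contra hcon
      push_neg at hcon
      obtain ⟨q, hq0, hLq, hqW⟩ := ENNReal.lt_iff_exists_rat_btwn.1 hcon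
      obtain ⟨r, hr0, hqr, hrW⟩ := ENNReal.lt_iff_exists_rat_btwn.1 hqW
      set a : ℝ := (q : ℝ) with hadef
      set b : ℝ := (r : ℝ) with hbdef
      have hbpos : 0 < Real.toNNReal b :=
        lt_of_le_of_lt zero_le (ENNReal.coe_lt_coe.1 hqr)
      have hb0 : 0 < b := Real.toNNReal_pos.1 hbpos
      have hab : a < b := (Real.toNNReal_lt_toNNReal_iff hb0).1 (ENNReal.coe_lt_coe.1 hqr)
      have hcoe_a : ((Real.toNNReal a : ℝ≥0) : ℝ≥0∞) = ENNReal.ofReal a := rfl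
      have hcoe_b : ((Real.toNNReal b : ℝ≥0) : ℝ≥0∞) = ENNReal.ofReal b := rfl
      -- eventually small on the integer skeleton
      have hevsmall : ∀ᶠ n : ℕ in atTop, Z n ω < a := by
        have hLq' : limsup (fun n : ℕ => ENNReal.ofReal (Z n ω)) atTop
            < ENNReal.ofReal a := by
          rw [← hcoe_a]
          simp only [hLdef] at hLq
          exact hLq
        have h1 := Filter.eventually_lt_of_limsup_lt hLq'
        filter_upwards [h1] with n hn
        by_contra hcontra
        push_neg at hcontra
        exact absurd hn (not_lt.2 (ENNReal.ofReal_le_ofReal hcontra))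
      obtain ⟨N₀, hN₀⟩ := Filter.eventually_atTop.1 hevsmall
      -- frequently large at dyadic times
      have hBexists : ∀ M : ℕ, ∃ kj : ℕ × ℕ,
          ((M : ℕ) : ℝ≥0) ≤ SurvivalAux.D kj.1 kj.2
            ∧ b < Z (SurvivalAux.D kj.1 kj.2) ω := by
        intro M
        have hfreq : ∃ᶠ t : ℝ≥0 in atTop,
            ENNReal.ofReal b < ENNReal.ofReal (Z t ω) := by
          by_contra hnot
          rw [Filter.not_frequently] at hnot
          have hW' : W ω ≤ ENNReal.ofReal b := by
            simp only [hWdef]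
            rw [Filter.limsup_eq]
            refine sInf_le ?_
            filter_upwards [hnot] with t ht
            exact not_lt.1 ht
          rw [← hcoe_b] at hW'
          exact absurd hrW (not_lt.2 hW')
        obtain ⟨t, htM, htb⟩ := Filter.frequently_atTop.1 hfreq (M : ℝ≥0)
        have hbZ : b < Z t ω := (ENNReal.ofReal_lt_ofReal_iff_of_nonneg hb0.le).1 htb
        have hct : Tendsto (fun s => Z s ω) (nhdsWithin t (Set.Ici t)) (𝓝 (Z t ω)) :=
          (hrc t).1
        have hev2 : ∀ᶠ s in nhdsWithin t (Set.Ici t), b < Z s ω :=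
          hct.eventually (eventually_gt_nhds hbZ)
        rw [(nhdsGE_basis_Ico t).eventually_iff] at hev2
        obtain ⟨u, htu, hIco⟩ := hev2
        obtain ⟨k, hk⟩ := _root_.exists_pow_lt_of_lt_one (tsub_pos_of_lt htu)
          (by rw [div_lt_one (by norm_num : (0:ℝ≥0) < 2)]; norm_num : (1 : ℝ≥0) / 2 < 1)
        set j := ⌈(t : ℝ≥0) * 2 ^ k⌉₊ with hjdef
        have h2k : (0 : ℝ≥0) < 2 ^ k := SurvivalAux.two_pow_pos
        have htdy : t ≤ SurvivalAux.D k j := by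
          unfold SurvivalAux.D
          rw [le_div_iff₀ h2k]
          exact Nat.le_ceil _
        have hdyu : SurvivalAux.D k j < u := by
          unfold SurvivalAux.D
          rw [div_lt_iff₀ h2k]
          have hone : ((1 : ℝ≥0) / 2) ^ k * 2 ^ k = 1 := by
            rw [div_pow, one_pow, div_mul_cancel₀ _ h2k.ne']
          calc (j : ℝ≥0) < t * 2 ^ k + 1 := Nat.ceil_lt_add_one zero_le
            _ = t * 2 ^ k + ((1 : ℝ≥0) / 2) ^ k * 2 ^ k := by rw [hone]
            _ ≤ t * 2 ^ k + (u - t) * 2 ^ k := by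
                exact add_le_add_right (mul_le_mul_left hk.le _) _
            _ = u * 2 ^ k := by rw [← add_mul, add_tsub_cancel_of_le htu.le]
        exact ⟨(k, j), le_trans htM htdy, hIco ⟨htdy, hdyu⟩⟩
      choose pick hpick1 hpick2 using hBexists
      set g : ℕ → ℕ := fun i => Nat.rec N₀
        (fun _ prev => ⌊SurvivalAux.D (pick prev).1 (pick prev).2⌋₊ + 1) i with hgdef
      have hgsucc : ∀ i, g (i + 1)
          = ⌊SurvivalAux.D (pick (g i)).1 (pick (g i)).2⌋₊ + 1 := fun i => rfl
      have hglt : ∀ i, g i < g (i + 1) := by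
        intro i
        have h1 := Nat.le_floor (hpick1 (g i))
        rw [hgsucc i]
        omega
      have hgN₀ : ∀ i, N₀ ≤ g i := by
        intro i
        induction i with
        | zero => exact le_rfl
        | succ n ih => exact le_trans ih (hglt n).le
      have hfin' := hfin q r (by rw [hadef, hbdef] at hab; exact_mod_cast hab)
      have hall : ∀ mm : ℕ, (mm : ℝ≥0∞) ≤ ⨆ k, upcrossings a b (fK k) ω := by
        intro mm
        set K := Finset.sup (Finset.range mm) (fun i => (pick (g i)).1) with hKdef
        have hKk : ∀ i, i < mm → (pick (g i)).1 ≤ K := fun i hi =>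
          Finset.le_sup (f := fun i => (pick (g i)).1) (Finset.mem_range.2 hi)
        refine le_trans ?_ (le_iSup (fun k => upcrossings a b (fK k) ω) K)
        have hDu : ∀ i : ℕ, SurvivalAux.D K (g i * 2 ^ K) = ((g i : ℕ) : ℝ≥0) :=
          fun i => SurvivalAux.D_nat K (g i)
        have hDv : ∀ i, i < mm → SurvivalAux.D K ((pick (g i)).2 * 2 ^ (K - (pick (g i)).1))
            = SurvivalAux.D (pick (g i)).1 (pick (g i)).2 :=
          fun i hi => SurvivalAux.D_lift (hKk i hi) _
        refine SurvivalAux.le_upcrossings_of_chain hab (fun i => g i * 2 ^ K)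
          (fun i => (pick (g i)).2 * 2 ^ (K - (pick (g i)).1)) ?_ ?_ ?_ ?_
        · intro i hi
          show Z (SurvivalAux.D K (g i * 2 ^ K)) ω ≤ a
          rw [hDu i]
          exact (hN₀ (g i) (hgN₀ i)).le
        · intro i hi
          show b ≤ Z (SurvivalAux.D K ((pick (g i)).2 * 2 ^ (K - (pick (g i)).1))) ω
          rw [hDv i hi]
          exact (hpick2 (g i)).le
        · intro i hi
          refine (SurvivalAux.D_strictMono K).le_iff_le.1 ?_
          rw [hDu i, hDv i hi]
          exact hpick1 (g i)
        · intro i hi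
          refine (SurvivalAux.D_strictMono K).lt_iff_lt.1 ?_
          rw [hDv i (by omega), hDu (i + 1)]
          have hfl := Nat.lt_floor_add_one (SurvivalAux.D (pick (g i)).1 (pick (g i)).2)
          rw [hgsucc i]
          push_cast
          exact hfl
      have htop : (⊤ : ℝ≥0∞) ≤ ⨆ k, upcrossings a b (fK k) ω := by
        rw [← ENNReal.iSup_natCast]
        exact iSup_le hall
      exact absurd hfin' (not_lt.2 htop)
    filter_upwards [hWle] with ω h
    exact le_antisymm h (hWgeL ω)
  -- final assembly
  have hWsplit : ∫⁻ ω, ENNReal.ofReal z / W ω ∂Q = ∫⁻ ω in S, ENNReal.ofReal z / W ω ∂Q := by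
    rw [← lintegral_add_compl (fun ω => ENNReal.ofReal z / W ω) hSmeas]
    have h0 : ∫⁻ ω in Sᶜ, ENNReal.ofReal z / W ω ∂Q = 0 := by
      have hz0 : ∀ ω ∈ Sᶜ, ENNReal.ofReal z / W ω = (fun _ => (0:ℝ≥0∞)) ω := by
        intro ω hω
        have hLtop : L ω = ∞ := by
          simpa [hSdef, lt_top_iff_ne_top, not_not] using hω
        have hWtop : W ω = ∞ := top_le_iff.1 (hLtop ▸ hWgeL ω)
        simp [hWtop]
      rw [setLIntegral_congr_fun hSmeas.compl hz0, lintegral_zero]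
    rw [h0, add_zero]
  have hQμd : ∫⁻ ω in S, ENNReal.ofReal z / W ω ∂Q
      = ∫⁻ ω in S, ENNReal.ofReal z / W ω ∂μd := by rw [hrS]
  have hacR : μd.restrict S ≪ P :=
    (Measure.absolutelyContinuous_of_le (Measure.restrict_le_self)).trans
      (withDensity_absolutelyContinuous P _)
  have hWLμ : ∫⁻ ω in S, ENNReal.ofReal z / W ω ∂μd
      = ∫⁻ ω in S, ENNReal.ofReal z / L ω ∂μd := by
    refine lintegral_congr_ae ?_
    have : W =ᵐ[μd.restrict S] L := hWLae.filter_mono hacR.ae_le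
    exact this.mono fun ω h => by simp only [h]
  have hcomp : ∫⁻ ω in S, ENNReal.ofReal z / L ω ∂μd = P ({ω | 0 < L ω} ∩ S) := by
    rw [hμdef, restrict_withDensity hSmeas,
      lintegral_withDensity_eq_lintegral_mul _ hdensmeas (g := fun ω => ENNReal.ofReal z / L ω)
        (Measurable.div measurable_const hLmeas)]
    have hpt : ∀ ω ∈ S, ((fun ω => L ω / ENNReal.ofReal z) * fun ω => ENNReal.ofReal z / L ω) ω
        = Set.indicator {ω | 0 < L ω} (fun _ => (1:ℝ≥0∞)) ω := by
      intro ω hω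
      have hLlt : L ω < ∞ := hω
      rcases eq_or_lt_of_le (zero_le : 0 ≤ L ω) with h0 | h0
      · simp [Pi.mul_apply, ← h0, Set.indicator_of_notMem, lt_irrefl]
      · rw [Set.indicator_of_mem (by exact h0)]
        show L ω / ENNReal.ofReal z * (ENNReal.ofReal z / L ω) = 1
        rw [div_eq_mul_inv, div_eq_mul_inv, mul_comm (ENNReal.ofReal z) (L ω)⁻¹,
          mul_mul_mul_comm, ENNReal.mul_inv_cancel h0.ne' hLlt.ne,
          ENNReal.inv_mul_cancel (ENNReal.ofReal_pos.2 hz).ne' ENNReal.ofReal_ne_top, mul_one]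
    have hTm : MeasurableSet {ω | 0 < L ω} := by exact hLmeas measurableSet_Ioi
    rw [setLIntegral_congr_fun hSmeas hpt, lintegral_indicator hTm]
    simp only [lintegral_one, Measure.restrict_restrict hTm,
      Measure.restrict_apply MeasurableSet.univ, Set.univ_inter]
  have hScnull : P Sᶜ = 0 := by
    have hae : ∀ᵐ ω ∂P, ω ∈ S := hLconv.mono fun ω h => h.2
    exact mem_ae_iff.1 hae
  have hTS : P ({ω | 0 < L ω} ∩ S) = P {ω | 0 < L ω} := by
    refine le_antisymm (measure_mono Set.inter_subset_left) ?_
    calc P {ω | 0 < L ω} ≤ P ({ω | 0 < L ω} ∩ S) + P ({ω | 0 < L ω} \ S) :=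
          measure_le_inter_add_diff _ _ _
      _ ≤ P ({ω | 0 < L ω} ∩ S) + P Sᶜ :=
          add_le_add_right (measure_mono fun ω h => h.2) _
      _ = P ({ω | 0 < L ω} ∩ S) := by rw [hScnull, add_zero]
  have hPT : P {ω | 0 < W ω} = P {ω | 0 < L ω} := by
    refine measure_congr ?_
    refine (Filter.eventuallyEq_set.2 ?_)
    filter_upwards [hWLae] with ω h
    simp [Set.mem_setOf_eq, h]
  show P {ω | 0 < W ω} = ∫⁻ ω, ENNReal.ofReal z / W ω ∂Q
  rw [hWsplit, hQμd, hWLμ, hcomp, hTS, hPT]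
end

section
/- Let (Ω, F, (F_t)_{t≥0}, P) be a filtered probability space with F = σ(⋃_t F_t), let z > 0, let (Z_t)_{t≥0} be a càdlàg nonnegative P-martingale with Z_0 = z almost surely, and let Q be a probability measure on (Ω, F) such that Q restricted to F_t equals (Z_t/z)·P restricted to F_t for every t ≥ 0. Set Z_∞ := limsup_{t→∞} Z_t ∈ [0,∞]. Then P( lim_{t→∞} Z_t > 0 ) ≥ z / E_Q[ Z_∞ ], with the conventions z/∞ = 0 and expectation E_Q taken in [0,∞]. -/
open MeasureTheory Filter NNReal ENNReal
open Topology

/-- Two measures agreeing on a sub-σ-algebra give the same lintegral of functions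
measurable w.r.t. that sub-σ-algebra. -/
lemma lintegral_eq_of_agree_on {Ω : Type*} {m' : MeasurableSpace Ω} {m : MeasurableSpace Ω}
    (hle : m' ≤ m) (Q μ : Measure Ω) (h : ∀ A, MeasurableSet[m'] A → Q A = μ A)
    {f : Ω → ℝ≥0∞} (hf : Measurable[m'] f) :
    ∫⁻ ω, f ω ∂Q = ∫⁻ ω, f ω ∂μ := by
  have hQt : ∫⁻ ω, f ω ∂(Q.trim hle) = ∫⁻ ω, f ω ∂Q := lintegral_trim hle hf
  have hμt : ∫⁻ ω, f ω ∂(μ.trim hle) = ∫⁻ ω, f ω ∂μ := lintegral_trim hle hf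
  rw [← hQt, ← hμt]
  congr 1
  refine @Measure.ext Ω m' _ _ fun s hs => ?_
  rw [trim_measurableSet_eq hle hs, trim_measurableSet_eq hle hs, h s hs]

/-- If `Z` is a càdlàg nonnegative `P`-martingale with `Z 0 = z > 0` and
`Q` restricted to `ℱ t` equals `(Z t / z) • P` for every `t`, then
`P(lim Z t > 0) ≥ z / E_Q[Z∞]` where `Z∞ = limsup Z t` (with `z/∞ = 0`). -/
theorem survival_lower_bound {Ω : Type*} {m : MeasurableSpace Ω} (P Q : Measure Ω)
    [IsProbabilityMeasure P] [IsProbabilityMeasure Q]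
    (ℱ : Filtration ℝ≥0 m) (hm : (⨆ t : ℝ≥0, (ℱ t : MeasurableSpace Ω)) = m)
    (z : ℝ) (hz : 0 < z) (Z : ℝ≥0 → Ω → ℝ)
    (hmart : Martingale Z ℱ P)
    (hpos : ∀ t : ℝ≥0, ∀ᵐ ω ∂P, 0 ≤ Z t ω)
    (hcadlag : ∀ᵐ ω ∂P, ∀ t : ℝ≥0,
      ContinuousWithinAt (fun s => Z s ω) (Set.Ici t) t ∧
      ∃ l : ℝ, Tendsto (fun s => Z s ω) (nhdsWithin t (Set.Iio t)) (nhds l))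
    (hZ0 : ∀ᵐ ω ∂P, Z 0 ω = z)
    (hQ : ∀ (t : ℝ≥0) (A : Set Ω), MeasurableSet[ℱ t] A →
      Q A = ∫⁻ ω in A, ENNReal.ofReal (Z t ω / z) ∂P) :
    ENNReal.ofReal z
        / (∫⁻ ω, limsup (fun t : ℝ≥0 => ENNReal.ofReal (Z t ω)) atTop ∂Q)
      ≤ P {ω | 0 < limsup (fun t : ℝ≥0 => ENNReal.ofReal (Z t ω)) atTop} := by
  classical
  set z' : ℝ≥0∞ := ENNReal.ofReal z with hz'def
  have hz'0 : z' ≠ 0 := by simp [hz'def, hz]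
  have hz'top : z' ≠ ∞ := ofReal_ne_top
  set D : ℝ≥0∞ := ∫⁻ ω, limsup (fun t : ℝ≥0 => ENNReal.ofReal (Z t ω)) atTop ∂Q with hDdef
  set A : Set Ω := {ω | 0 < limsup (fun t : ℝ≥0 => ENNReal.ofReal (Z t ω)) atTop} with hAdef
  by_cases hD : D = ∞
  · rw [hD]; simp
  -- the discrete-time process
  set a : ℕ → Ω → ℝ≥0∞ := fun n ω => ENNReal.ofReal (Z n ω) with hadef
  have hZmeas : ∀ t : ℝ≥0, Measurable (Z t) := fun t =>
    ((hmart.stronglyAdapted t).mono (ℱ.le t)).measurable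
  have hameas : ∀ n : ℕ, Measurable (a n) := fun n =>
    ENNReal.measurable_ofReal.comp (hZmeas n)
  -- the discrete limsup
  set W : Ω → ℝ≥0∞ := fun ω => limsup (fun n : ℕ => a n ω) atTop with hWdef
  have hWmeas : Measurable W := Measurable.limsup hameas
  have hWle : ∀ ω, W ω ≤ limsup (fun t : ℝ≥0 => ENNReal.ofReal (Z t ω)) atTop := by
    intro ω
    have hmap : (Filter.map (Nat.cast : ℕ → ℝ≥0) atTop) ≤ atTop :=
      tendsto_natCast_atTop_atTop
    have h1 : W ω = limsup (fun t : ℝ≥0 => ENNReal.ofReal (Z t ω))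
        (Filter.map (Nat.cast : ℕ → ℝ≥0) atTop) :=
      limsup_comp (fun t : ℝ≥0 => ENNReal.ofReal (Z t ω)) (Nat.cast : ℕ → ℝ≥0) atTop
    rw [h1]
    exact limsup_le_limsup_of_le hmap
  set V : ℝ≥0∞ := ∫⁻ ω, W ω ∂Q with hVdef
  have hVD : V ≤ D := lintegral_mono fun ω => hWle ω
  have hVtop : V ≠ ∞ := fun h => hD (top_le_iff.mp (h ▸ hVD))
  have hWltQ : ∀ᵐ ω ∂Q, W ω < ∞ := ae_lt_top hWmeas hVtop
  -- martingale convergence along ℕ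
  have hconv : ∀ᵐ ω ∂P, ∃ l : ℝ≥0∞, l ≠ ∞ ∧
      Tendsto (fun n : ℕ => a n ω) atTop (𝓝 l) := by
    set G : Filtration ℕ m :=
      { seq := fun n => ℱ n
        mono' := fun i j hij => ℱ.mono (by exact_mod_cast hij)
        le' := fun n => ℱ.le n } with hGdef
    have hmartN : Martingale (fun n : ℕ => Z n) G P :=
      ⟨fun n => hmart.stronglyAdapted n, fun i j hij => hmart.2 i j (by exact_mod_cast hij)⟩
    have hint : ∀ t : ℝ≥0, ∫ ω, Z t ω ∂P = z := by
      intro t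
      have h0 : ∫ ω, Z 0 ω ∂P = z := by
        rw [integral_congr_ae hZ0]
        simp
      have h1 : ∫ ω in Set.univ, Z 0 ω ∂P = ∫ ω in Set.univ, Z t ω ∂P :=
        hmart.setIntegral_eq (show (0:ℝ≥0) ≤ t from zero_le) MeasurableSet.univ
      rw [setIntegral_univ, setIntegral_univ] at h1
      rw [← h1, h0]
    have hbdd : ∀ n : ℕ, eLpNorm ((fun n : ℕ => Z n) n) 1 P ≤ ENNReal.ofReal z := by
      intro n
      rw [eLpNorm_one_eq_lintegral_enorm]
      have h2 : ∫⁻ ω, ‖Z n ω‖ₑ ∂P = ∫⁻ ω, ENNReal.ofReal (Z n ω) ∂P :=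
        lintegral_congr_ae ((hpos n).mono fun ω h => Real.enorm_eq_ofReal h)
      rw [h2, ← ofReal_integral_eq_lintegral_ofReal (hmart.integrable n) (hpos n), hint n]
    have h := hmartN.submartingale.ae_tendsto_limitProcess hbdd
    filter_upwards [h] with ω hω
    exact ⟨ENNReal.ofReal (G.limitProcess (fun n : ℕ => Z n) P ω), ofReal_ne_top,
      (ENNReal.continuous_ofReal.tendsto _).comp hω⟩
  have hWlim : ∀ᵐ ω ∂P, Tendsto (fun n : ℕ => a n ω) atTop (𝓝 (W ω)) ∧ W ω ≠ ∞ := by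
    filter_upwards [hconv] with ω ⟨l, hl, hten⟩
    have : W ω = l := hten.limsup_eq
    rw [this]; exact ⟨hten, hl⟩
  -- {W > 0} ⊆ A
  have hWA : {ω | 0 < W ω} ⊆ A := fun ω hω => lt_of_lt_of_le hω (hWle ω)
  -- main estimate for each positive ε
  have key : ∀ ε : ℝ≥0∞, 0 < ε → ε ≠ ∞ → z' ≤ P A * V + ε := by
    intro ε hε0 hεtop
    set u : ℝ≥0∞ := ∫⁻ ω, z' / (W ω ⊔ ε) ∂Q with hudef
    set v : ℝ≥0∞ := ∫⁻ ω, (W ω ⊔ ε) ∂Q with hvdef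
    -- change of measure at each time n
    have hchange : ∀ n : ℕ,
        ∫⁻ ω, z' / (a n ω ⊔ ε) ∂Q = ∫⁻ ω, a n ω / (a n ω ⊔ ε) ∂P := by
      intro n
      have hd : Measurable fun ω => ENNReal.ofReal (Z n ω / z) :=
        ENNReal.measurable_ofReal.comp ((hZmeas n).div_const z)
      have hZn : Measurable[ℱ (n : ℝ≥0)] (Z n) := (hmart.stronglyAdapted n).measurable
      have hfm : Measurable[ℱ (n : ℝ≥0)] fun ω => z' / (a n ω ⊔ ε) :=
        measurable_const.div
          ((ENNReal.measurable_ofReal.comp hZn).sup measurable_const)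
      calc ∫⁻ ω, z' / (a n ω ⊔ ε) ∂Q
          = ∫⁻ ω, z' / (a n ω ⊔ ε)
              ∂(P.withDensity fun ω => ENNReal.ofReal (Z n ω / z)) := by
            refine lintegral_eq_of_agree_on (ℱ.le n) Q _ (fun B hB => ?_) hfm
            rw [hQ n B hB, withDensity_apply _ ((ℱ.le n) B hB)]
        _ = ∫⁻ ω, ENNReal.ofReal (Z n ω / z) * (z' / (a n ω ⊔ ε)) ∂P :=
            lintegral_withDensity_eq_lintegral_mul P hd (hfm.mono (ℱ.le n) le_rfl)
        _ = ∫⁻ ω, a n ω / (a n ω ⊔ ε) ∂P := by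
            refine lintegral_congr fun ω => ?_
            have h1 : ENNReal.ofReal (Z n ω / z) = a n ω / z' :=
              ENNReal.ofReal_div_of_pos hz
            rw [h1, div_eq_mul_inv, div_eq_mul_inv, div_eq_mul_inv,
              show a n ω * z'⁻¹ * (z' * (a n ω ⊔ ε)⁻¹)
                  = z'⁻¹ * z' * (a n ω * (a n ω ⊔ ε)⁻¹) by ring,
              ENNReal.inv_mul_cancel hz'0 hz'top, one_mul]
    -- Fatou under Q
    have hfatou : u ≤ liminf (fun n : ℕ => ∫⁻ ω, z' / (a n ω ⊔ ε) ∂Q) atTop := by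
      have hpt : ∀ ω, z' / (W ω ⊔ ε) ≤ liminf (fun n : ℕ => z' / (a n ω ⊔ ε)) atTop := by
        intro ω
        have hanti : Antitone fun x : ℝ≥0∞ => z' / (x ⊔ ε) := fun x y hxy =>
          ENNReal.div_le_div_left (sup_le_sup_right hxy ε) z'
        have hs : Tendsto (fun x : ℝ≥0∞ => x ⊔ ε) (𝓝 (W ω)) (𝓝 (W ω ⊔ ε)) :=
          ((continuous_id.sup continuous_const).tendsto (W ω))
        have hcont : ContinuousAt (fun x : ℝ≥0∞ => z' / (x ⊔ ε)) (W ω) :=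
          ENNReal.Tendsto.const_div hs (Or.inr hz'top)
        exact (hanti.map_limsup_of_continuousAt (fun n : ℕ => a n ω) hcont).le
      calc u ≤ ∫⁻ ω, liminf (fun n : ℕ => z' / (a n ω ⊔ ε)) atTop ∂Q :=
            lintegral_mono hpt
        _ ≤ liminf (fun n : ℕ => ∫⁻ ω, z' / (a n ω ⊔ ε) ∂Q) atTop :=
            lintegral_liminf_le fun n =>
              measurable_const.div ((hameas n).sup measurable_const)
    -- dominated convergence under P
    have hdct : Tendsto (fun n : ℕ => ∫⁻ ω, a n ω / (a n ω ⊔ ε) ∂P) atTop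
        (𝓝 (∫⁻ ω, W ω / (W ω ⊔ ε) ∂P)) := by
      refine tendsto_lintegral_of_dominated_convergence (fun _ => 1)
        (fun n => (hameas n).div ((hameas n).sup measurable_const))
        (fun n => Eventually.of_forall fun ω =>
          ENNReal.div_le_of_le_mul (by simpa using (le_sup_left : a n ω ≤ a n ω ⊔ ε)))
        (by simp) ?_
      filter_upwards [hWlim] with ω hω
      obtain ⟨hten, hWfin⟩ := hω
      have hs : Tendsto (fun n : ℕ => a n ω ⊔ ε) atTop (𝓝 (W ω ⊔ ε)) :=
        (((continuous_id.sup continuous_const).tendsto (W ω)).comp hten)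
      have hne : (W ω ⊔ ε) ≠ 0 := (lt_of_lt_of_le hε0 le_sup_right).ne'
      have hnt : (W ω ⊔ ε) ≠ ∞ :=
        (sup_lt_iff.mpr ⟨hWfin.lt_top, hεtop.lt_top⟩).ne
      exact ENNReal.Tendsto.div hten (Or.inr hne) hs (Or.inl hnt)
    -- the limit is at most P A
    have hlimle : ∫⁻ ω, W ω / (W ω ⊔ ε) ∂P ≤ P A := by
      have hsub : MeasurableSet {ω | 0 < W ω} :=
        measurableSet_lt measurable_const hWmeas
      calc ∫⁻ ω, W ω / (W ω ⊔ ε) ∂P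
          ≤ ∫⁻ ω, {ω | 0 < W ω}.indicator 1 ω ∂P := by
            refine lintegral_mono fun ω => ?_
            by_cases h : W ω = 0
            · simp [h]
            · rw [Set.indicator_of_mem (by simpa [pos_iff_ne_zero] using h :
                ω ∈ {ω | 0 < W ω})]
              exact ENNReal.div_le_of_le_mul
                (by rw [Pi.one_apply, one_mul]; exact le_sup_left)
        _ = P {ω | 0 < W ω} := lintegral_indicator_one hsub
        _ ≤ P A := measure_mono hWA
    have huA : u ≤ P A := by
      calc u ≤ liminf (fun n : ℕ => ∫⁻ ω, z' / (a n ω ⊔ ε) ∂Q) atTop := hfatou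
        _ = liminf (fun n : ℕ => ∫⁻ ω, a n ω / (a n ω ⊔ ε) ∂P) atTop := by
            simp_rw [hchange]
        _ = ∫⁻ ω, W ω / (W ω ⊔ ε) ∂P := hdct.liminf_eq
        _ ≤ P A := hlimle
    -- Cauchy–Schwarz
    have hCS : z' ≤ u * v := by
      have hmeas1 : AEMeasurable (fun ω => z' / (W ω ⊔ ε)) Q :=
        (measurable_const.div (hWmeas.sup measurable_const)).aemeasurable
      have hmeas2 : AEMeasurable (fun ω => W ω ⊔ ε) Q :=
        (hWmeas.sup measurable_const).aemeasurable
      have hae : (fun ω => (z' / (W ω ⊔ ε)) ^ (1/2 : ℝ) * (W ω ⊔ ε) ^ (1/2 : ℝ))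
          =ᵐ[Q] fun _ => z' ^ (1/2 : ℝ) := by
        filter_upwards [hWltQ] with ω hω
        have hne : (W ω ⊔ ε) ≠ 0 := (lt_of_lt_of_le hε0 le_sup_right).ne'
        have hnt : (W ω ⊔ ε) ≠ ∞ := (sup_lt_iff.mpr ⟨hω, hεtop.lt_top⟩).ne
        rw [← ENNReal.mul_rpow_of_nonneg _ _ (by norm_num : (0:ℝ) ≤ 1/2),
          ENNReal.div_mul_cancel hne hnt]
      have h2 := ENNReal.lintegral_mul_norm_pow_le hmeas1 hmeas2
        (by norm_num : (0:ℝ) ≤ 1/2) (by norm_num : (0:ℝ) ≤ 1/2)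
        (by norm_num : (1:ℝ)/2 + 1/2 = 1)
      rw [lintegral_congr_ae hae, lintegral_const, measure_univ, mul_one] at h2
      have h3 : z' ^ ((1:ℝ)/2) ≤ (u * v) ^ ((1:ℝ)/2) := by
        rw [ENNReal.mul_rpow_of_nonneg _ _ (by norm_num : (0:ℝ) ≤ 1/2)]
        exact h2
      exact (ENNReal.rpow_le_rpow_iff (by norm_num : (0:ℝ) < 1/2)).mp h3
    have hv : v ≤ V + ε := by
      calc v ≤ ∫⁻ ω, (W ω + ε) ∂Q :=
            lintegral_mono fun ω => sup_le le_self_add le_add_self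
        _ = V + ε := by
            rw [lintegral_add_right _ measurable_const, lintegral_const,
              measure_univ, mul_one]
    calc z' ≤ u * v := hCS
      _ ≤ P A * (V + ε) := mul_le_mul' huA hv
      _ = P A * V + P A * ε := by rw [mul_add]
      _ ≤ P A * V + ε := add_le_add_right (by
          calc P A * ε ≤ 1 * ε := mul_le_mul_left prob_le_one ε
            _ = ε := one_mul ε) _
  -- conclude
  have hmain : z' ≤ P A * V := by
    refine ENNReal.le_of_forall_pos_le_add fun ε hε hfin => ?_
    exact key ε (by exact_mod_cast hε) coe_ne_top
  have : z' ≤ P A * D := hmain.trans (mul_le_mul_right hVD _)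
  exact ENNReal.div_le_of_le_mul this
end

section
/- Let λ ∈ ℝ and define f : [0,∞) → ℝ by f(t) = λ(t+1) sin(log(t+1)). Then limsup_{t→∞} (1/(2t)) ∫₀ᵗ f'(s)² ds = (λ²/√5)·((√5+1)/2) and liminf_{t→∞} (1/(2t)) ∫₀ᵗ f'(s)² ds = (λ²/√5)·((√5−1)/2). -/
open MeasureTheory Filter

namespace GoldenAux

noncomputable def G (lam t : ℝ) : ℝ :=
  lam ^ 2 * (t + ((t + 1) *
    (Real.sin (2 * Real.log (t + 1)) - 2 * Real.cos (2 * Real.log (t + 1)))) / 5)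

lemma hasDerivAt_G (lam : ℝ) {s : ℝ} (hs : 0 < s + 1) :
    HasDerivAt (G lam) (lam ^ 2 * (1 + Real.sin (2 * Real.log (s + 1)))) s := by
  have h1 : HasDerivAt (fun u : ℝ => u + 1) 1 s := (hasDerivAt_id s).add_const 1
  have hlog : HasDerivAt (fun u : ℝ => Real.log (u + 1)) (1 / (s + 1)) s := by
    simpa using h1.log hs.ne'
  have h2L : HasDerivAt (fun u : ℝ => 2 * Real.log (u + 1)) (2 * (1 / (s + 1))) s :=
    hlog.const_mul 2
  have hsin := h2L.sin
  have hcos := h2L.cos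
  have hp : HasDerivAt
      (fun u : ℝ => Real.sin (2 * Real.log (u + 1)) - 2 * Real.cos (2 * Real.log (u + 1)))
      (Real.cos (2 * Real.log (s + 1)) * (2 * (1 / (s + 1)))
        - 2 * (-Real.sin (2 * Real.log (s + 1)) * (2 * (1 / (s + 1))))) s :=
    hsin.sub (hcos.const_mul 2)
  have hmul := h1.fun_mul hp
  have hsum := ((hasDerivAt_id s).fun_add (hmul.div_const 5)).const_mul (lam ^ 2)
  have hfun : G lam = fun u : ℝ => lam ^ 2 * (u + ((u + 1) *
      (Real.sin (2 * Real.log (u + 1)) - 2 * Real.cos (2 * Real.log (u + 1)))) / 5) := rfl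
  rw [hfun]
  refine hsum.congr_deriv ?_
  field_simp
  ring

lemma deriv_f (lam : ℝ) {s : ℝ} (hs : 0 < s + 1) :
    deriv (fun u : ℝ => lam * (u + 1) * Real.sin (Real.log (u + 1))) s
      = lam * (Real.sin (Real.log (s + 1)) + Real.cos (Real.log (s + 1))) := by
  have h1 : HasDerivAt (fun u : ℝ => u + 1) 1 s := (hasDerivAt_id s).add_const 1
  have hlog : HasDerivAt (fun u : ℝ => Real.log (u + 1)) (1 / (s + 1)) s := by
    simpa using h1.log hs.ne'
  have hsin := hlog.sin
  have hfn : (fun u : ℝ => lam * (u + 1) * Real.sin (Real.log (u + 1)))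
      = fun u : ℝ => lam * ((u + 1) * Real.sin (Real.log (u + 1))) := by
    funext u; ring
  rw [hfn, ((h1.fun_mul hsin).const_mul lam).deriv]
  field_simp

lemma integral_eq (lam : ℝ) {t : ℝ} (ht : 0 ≤ t) :
    ∫ s in (0:ℝ)..t, (deriv (fun u : ℝ => lam * (u + 1) * Real.sin (Real.log (u + 1))) s) ^ 2
      = G lam t - G lam 0 := by
  have h0 : Set.uIcc (0:ℝ) t = Set.Icc 0 t := Set.uIcc_of_le ht
  have hcongr : Set.EqOn
      (fun s => (deriv (fun u : ℝ => lam * (u + 1) * Real.sin (Real.log (u + 1))) s) ^ 2)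
      (fun s => lam ^ 2 * (1 + Real.sin (2 * Real.log (s + 1)))) (Set.uIcc (0:ℝ) t) := by
    intro s hs
    rw [h0] at hs
    have hs1 : 0 < s + 1 := by linarith [hs.1]
    simp only
    rw [deriv_f lam hs1, Real.sin_two_mul]
    linear_combination lam ^ 2 * Real.sin_sq_add_cos_sq (Real.log (s + 1))
  rw [intervalIntegral.integral_congr hcongr]
  apply intervalIntegral.integral_eq_sub_of_hasDerivAt
  · intro s hs
    rw [h0] at hs
    exact hasDerivAt_G lam (by linarith [hs.1])
  · apply ContinuousOn.intervalIntegrable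
    rw [h0]
    have hc : ContinuousOn (fun s : ℝ => Real.log (s + 1)) (Set.Icc 0 t) := by
      apply ContinuousOn.log
      · exact (continuous_id.add continuous_const).continuousOn
      · intro x hx; have := hx.1; intro h; linarith [hx.1]
    exact continuousOn_const.mul (continuousOn_const.add
      (Real.continuous_sin.comp_continuousOn (continuousOn_const.mul hc)))

lemma habsP0 (θ : ℝ) : |Real.sin θ - 2 * Real.cos θ| ≤ Real.sqrt 5 := by
  have h : (Real.sin θ - 2 * Real.cos θ) ^ 2 ≤ 5 := by
    nlinarith [Real.sin_sq_add_cos_sq θ, sq_nonneg (2 * Real.sin θ + Real.cos θ)]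
  calc |Real.sin θ - 2 * Real.cos θ| = Real.sqrt ((Real.sin θ - 2 * Real.cos θ) ^ 2) :=
        (Real.sqrt_sq_eq_abs _).symm
    _ ≤ Real.sqrt 5 := Real.sqrt_le_sqrt h

lemma h5 : Real.sqrt 5 ^ 2 = 5 := Real.sq_sqrt (by norm_num)

lemma h2lt : (2:ℝ) < Real.sqrt 5 := by nlinarith [h5, Real.sqrt_nonneg 5]

lemma sqrt5_pos : (0:ℝ) < Real.sqrt 5 := by linarith [h2lt]

noncomputable def P (t : ℝ) : ℝ :=
  Real.sin (2 * Real.log (t + 1)) - 2 * Real.cos (2 * Real.log (t + 1))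

lemma habsP (t : ℝ) : |P t| ≤ Real.sqrt 5 := habsP0 _

noncomputable def Fex (lam t : ℝ) : ℝ :=
  1 / (2 * t) * (lam ^ 2 * (t + ((t + 1) * P t) / 5 + 2 / 5))

lemma F_eq_Fex (lam : ℝ) {t : ℝ} (ht : 0 < t) :
    (1 / (2 * t)) * ∫ s in (0:ℝ)..t,
        (deriv (fun u : ℝ => lam * (u + 1) * Real.sin (Real.log (u + 1))) s) ^ 2
      = Fex lam t := by
  rw [integral_eq lam ht.le]
  simp only [G, P, Fex, zero_add, Real.log_one, mul_zero, Real.sin_zero, Real.cos_zero]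
  ring

lemma Fex_le (lam : ℝ) {t : ℝ} (ht : 1 ≤ t) :
    Fex lam t ≤ lam ^ 2 * (5 + Real.sqrt 5) / 10 + lam ^ 2 * (Real.sqrt 5 + 2) / 10 * t⁻¹ := by
  have ht0 : (0:ℝ) < t := lt_of_lt_of_le one_pos ht
  have hP : P t ≤ Real.sqrt 5 := (abs_le.1 (habsP _)).2
  have hid : (lam ^ 2 * (5 + Real.sqrt 5) / 10 + lam ^ 2 * (Real.sqrt 5 + 2) / 10 * t⁻¹)
        - Fex lam t
      = lam ^ 2 * (t + 1) * (Real.sqrt 5 - P t) / (10 * t) := by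
    unfold Fex
    field_simp
    ring
  have hnn : 0 ≤ lam ^ 2 * (t + 1) * (Real.sqrt 5 - P t) / (10 * t) :=
    div_nonneg (mul_nonneg (mul_nonneg (sq_nonneg lam) (by linarith)) (by linarith))
      (by linarith)
  linarith

lemma le_Fex (lam : ℝ) {t : ℝ} (ht : 1 ≤ t) :
    lam ^ 2 * (5 - Real.sqrt 5) / 10 - lam ^ 2 * (Real.sqrt 5 + 2) / 10 * t⁻¹ ≤ Fex lam t := by
  have ht0 : (0:ℝ) < t := lt_of_lt_of_le one_pos ht
  have hP : -Real.sqrt 5 ≤ P t := (abs_le.1 (habsP _)).1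
  have hid : Fex lam t
        - (lam ^ 2 * (5 - Real.sqrt 5) / 10 - lam ^ 2 * (Real.sqrt 5 + 2) / 10 * t⁻¹)
      = lam ^ 2 * ((t + 1) * (P t + Real.sqrt 5) + 4) / (10 * t) := by
    unfold Fex
    field_simp
    ring
  have hnn : 0 ≤ lam ^ 2 * ((t + 1) * (P t + Real.sqrt 5) + 4) / (10 * t) := by
    apply div_nonneg _ (by linarith)
    apply mul_nonneg (sq_nonneg lam)
    nlinarith
  linarith

lemma Fex_max (lam : ℝ) {t : ℝ} (ht : 0 < t) (hP : P t = Real.sqrt 5) :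
    lam ^ 2 * (5 + Real.sqrt 5) / 10 ≤ Fex lam t := by
  have hid : Fex lam t - lam ^ 2 * (5 + Real.sqrt 5) / 10
      = lam ^ 2 * (Real.sqrt 5 + 2) / (10 * t) := by
    unfold Fex
    rw [hP]
    field_simp
    ring
  have hnn : 0 ≤ lam ^ 2 * (Real.sqrt 5 + 2) / (10 * t) := by positivity
  linarith

lemma Fex_min (lam : ℝ) {t : ℝ} (ht : 0 < t) (hP : P t = -Real.sqrt 5) :
    Fex lam t ≤ lam ^ 2 * (5 - Real.sqrt 5) / 10 := by
  have hid : lam ^ 2 * (5 - Real.sqrt 5) / 10 - Fex lam t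
      = lam ^ 2 * (Real.sqrt 5 - 2) / (10 * t) := by
    unfold Fex
    rw [hP]
    field_simp
    ring
  have hnn : 0 ≤ lam ^ 2 * (Real.sqrt 5 - 2) / (10 * t) :=
    div_nonneg (mul_nonneg (sq_nonneg lam) (by linarith [h2lt])) (by linarith)
  linarith

noncomputable def al : ℝ := Real.arcsin (2 / Real.sqrt 5)

lemma sin_al : Real.sin al = 2 / Real.sqrt 5 := by
  apply Real.sin_arcsin
  · have : (0:ℝ) ≤ 2 / Real.sqrt 5 := by positivity
    linarith
  · rw [div_le_one sqrt5_pos]; linarith [h2lt]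

lemma cos_al : Real.cos al = (Real.sqrt 5)⁻¹ := by
  rw [al, Real.cos_arcsin]
  rw [show (1:ℝ) - (2 / Real.sqrt 5) ^ 2 = (5:ℝ)⁻¹ by rw [div_pow, h5]; norm_num]
  rw [Real.sqrt_inv]

noncomputable def pt (c : ℝ) (n : ℕ) : ℝ := Real.exp ((c + n * (2 * Real.pi)) / 2) - 1

lemma pt_tendsto (c : ℝ) : Tendsto (pt c) atTop atTop := by
  have h1 : Tendsto (fun n : ℕ => (n : ℝ) * (2 * Real.pi)) atTop atTop :=
    tendsto_natCast_atTop_atTop.atTop_mul_const (by positivity)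
  have h2 := (tendsto_atTop_add_const_left _ c h1).atTop_div_const (by norm_num : (0:ℝ) < 2)
  have h3 := Real.tendsto_exp_atTop.comp h2
  have h4 := tendsto_atTop_add_const_right _ (-1 : ℝ) h3
  unfold pt
  simpa [sub_eq_add_neg, Function.comp] using h4

lemma P_pt_max (n : ℕ) : P (pt (al + Real.pi / 2) n) = Real.sqrt 5 := by
  have he : pt (al + Real.pi / 2) n + 1
      = Real.exp ((al + Real.pi / 2 + n * (2 * Real.pi)) / 2) := by
    simp [pt]
  unfold P
  rw [he, Real.log_exp,
    show 2 * ((al + Real.pi / 2 + n * (2 * Real.pi)) / 2)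
      = (al + Real.pi / 2) + n * (2 * Real.pi) by ring,
    Real.sin_add_nat_mul_two_pi, Real.cos_add_nat_mul_two_pi,
    Real.sin_add_pi_div_two, Real.cos_add_pi_div_two, sin_al, cos_al]
  field_simp
  norm_num

lemma P_pt_min (n : ℕ) : P (pt (al - Real.pi / 2) n) = -Real.sqrt 5 := by
  have he : pt (al - Real.pi / 2) n + 1
      = Real.exp ((al - Real.pi / 2 + n * (2 * Real.pi)) / 2) := by
    simp [pt]
  unfold P
  rw [he, Real.log_exp,
    show 2 * ((al - Real.pi / 2 + n * (2 * Real.pi)) / 2)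
      = (al - Real.pi / 2) + n * (2 * Real.pi) by ring,
    Real.sin_add_nat_mul_two_pi, Real.cos_add_nat_mul_two_pi,
    Real.sin_sub_pi_div_two, Real.cos_sub_pi_div_two, sin_al, cos_al]
  field_simp
  norm_num

end GoldenAux

/-- For `f(t) = λ(t+1)sin(log(t+1))`, the limsup and liminf of
`(1/(2t))∫₀ᵗ f'(s)² ds` are `(λ²/√5)·((√5+1)/2)` and `(λ²/√5)·((√5−1)/2)`. -/
theorem golden_ratio_averages (lam : ℝ) :
    limsup (fun t : ℝ => (1 / (2 * t)) * ∫ s in (0:ℝ)..t,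
        (deriv (fun u : ℝ => lam * (u + 1) * Real.sin (Real.log (u + 1))) s) ^ 2) atTop
      = (lam ^ 2 / Real.sqrt 5) * ((Real.sqrt 5 + 1) / 2) ∧
    liminf (fun t : ℝ => (1 / (2 * t)) * ∫ s in (0:ℝ)..t,
        (deriv (fun u : ℝ => lam * (u + 1) * Real.sin (Real.log (u + 1))) s) ^ 2) atTop
      = (lam ^ 2 / Real.sqrt 5) * ((Real.sqrt 5 - 1) / 2) := by
  have h5 := GoldenAux.h5
  have h2lt := GoldenAux.h2lt
  have h5pos := GoldenAux.sqrt5_pos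
  have h5ne : Real.sqrt 5 ≠ 0 := ne_of_gt h5pos
  have hEq : ∀ᶠ t : ℝ in atTop,
      (1 / (2 * t)) * (∫ s in (0:ℝ)..t,
        (deriv (fun u : ℝ => lam * (u + 1) * Real.sin (Real.log (u + 1))) s) ^ 2)
      = GoldenAux.Fex lam t := by
    filter_upwards [eventually_gt_atTop 0] with t ht
    exact GoldenAux.F_eq_Fex lam ht
  have hB : (0:ℝ) ≤ lam ^ 2 * (Real.sqrt 5 + 2) / 10 := by positivity
  have hUtend : Tendsto (fun t : ℝ =>
      lam ^ 2 * (5 + Real.sqrt 5) / 10 + lam ^ 2 * (Real.sqrt 5 + 2) / 10 * t⁻¹) atTop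
      (nhds (lam ^ 2 * (5 + Real.sqrt 5) / 10)) := by
    have h := tendsto_inv_atTop_zero.const_mul (lam ^ 2 * (Real.sqrt 5 + 2) / 10)
    simpa using tendsto_const_nhds.add h
  have hLtend : Tendsto (fun t : ℝ =>
      lam ^ 2 * (5 - Real.sqrt 5) / 10 - lam ^ 2 * (Real.sqrt 5 + 2) / 10 * t⁻¹) atTop
      (nhds (lam ^ 2 * (5 - Real.sqrt 5) / 10)) := by
    have h := tendsto_inv_atTop_zero.const_mul (lam ^ 2 * (Real.sqrt 5 + 2) / 10)
    simpa using tendsto_const_nhds.sub h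
  have hFU : ∀ᶠ t : ℝ in atTop, GoldenAux.Fex lam t
      ≤ lam ^ 2 * (5 + Real.sqrt 5) / 10 + lam ^ 2 * (Real.sqrt 5 + 2) / 10 * t⁻¹ := by
    filter_upwards [eventually_ge_atTop 1] with t ht
    exact GoldenAux.Fex_le lam ht
  have hFL : ∀ᶠ t : ℝ in atTop,
      lam ^ 2 * (5 - Real.sqrt 5) / 10 - lam ^ 2 * (Real.sqrt 5 + 2) / 10 * t⁻¹
      ≤ GoldenAux.Fex lam t := by
    filter_upwards [eventually_ge_atTop 1] with t ht
    exact GoldenAux.le_Fex lam ht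
  have hFUc : ∀ᶠ t : ℝ in atTop, GoldenAux.Fex lam t
      ≤ lam ^ 2 * (5 + Real.sqrt 5) / 10 + lam ^ 2 * (Real.sqrt 5 + 2) / 10 := by
    filter_upwards [eventually_ge_atTop 1] with t ht
    have h1 := GoldenAux.Fex_le lam ht
    have h2 : t⁻¹ ≤ 1 := inv_le_one_of_one_le₀ ht
    nlinarith
  have hFLc : ∀ᶠ t : ℝ in atTop,
      lam ^ 2 * (5 - Real.sqrt 5) / 10 - lam ^ 2 * (Real.sqrt 5 + 2) / 10
      ≤ GoldenAux.Fex lam t := by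
    filter_upwards [eventually_ge_atTop 1] with t ht
    have h1 := GoldenAux.le_Fex lam ht
    have h2 : t⁻¹ ≤ 1 := inv_le_one_of_one_le₀ ht
    nlinarith
  have hbddLe : IsBoundedUnder (· ≤ ·) atTop (GoldenAux.Fex lam) :=
    isBoundedUnder_of_eventually_le hFUc
  have hbddGe : IsBoundedUnder (· ≥ ·) atTop (GoldenAux.Fex lam) :=
    isBoundedUnder_of_eventually_ge hFLc
  have hfreqmax : ∃ᶠ t : ℝ in atTop, lam ^ 2 * (5 + Real.sqrt 5) / 10 ≤ GoldenAux.Fex lam t := by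
    rw [frequently_atTop]
    intro b
    obtain ⟨n, hn⟩ :=
      ((GoldenAux.pt_tendsto (GoldenAux.al + Real.pi / 2)).eventually_ge_atTop (max b 1)).exists
    refine ⟨GoldenAux.pt (GoldenAux.al + Real.pi / 2) n, le_trans (le_max_left b 1) hn, ?_⟩
    have h1 : (1:ℝ) ≤ GoldenAux.pt (GoldenAux.al + Real.pi / 2) n :=
      le_trans (le_max_right b 1) hn
    exact GoldenAux.Fex_max lam (by linarith) (GoldenAux.P_pt_max n)
  have hfreqmin : ∃ᶠ t : ℝ in atTop, GoldenAux.Fex lam t ≤ lam ^ 2 * (5 - Real.sqrt 5) / 10 := by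
    rw [frequently_atTop]
    intro b
    obtain ⟨n, hn⟩ :=
      ((GoldenAux.pt_tendsto (GoldenAux.al - Real.pi / 2)).eventually_ge_atTop (max b 1)).exists
    refine ⟨GoldenAux.pt (GoldenAux.al - Real.pi / 2) n, le_trans (le_max_left b 1) hn, ?_⟩
    have h1 : (1:ℝ) ≤ GoldenAux.pt (GoldenAux.al - Real.pi / 2) n :=
      le_trans (le_max_right b 1) hn
    exact GoldenAux.Fex_min lam (by linarith) (GoldenAux.P_pt_min n)
  have hAtarget : lam ^ 2 * (5 + Real.sqrt 5) / 10
      = lam ^ 2 / Real.sqrt 5 * ((Real.sqrt 5 + 1) / 2) := by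
    field_simp
    linear_combination 2 * lam ^ 2 * h5
  have hA'target : lam ^ 2 * (5 - Real.sqrt 5) / 10
      = lam ^ 2 / Real.sqrt 5 * ((Real.sqrt 5 - 1) / 2) := by
    field_simp
    linear_combination (-2) * lam ^ 2 * h5
  constructor
  · rw [Filter.limsup_congr hEq, ← hAtarget]
    apply le_antisymm
    · calc limsup (GoldenAux.Fex lam) atTop
          ≤ limsup (fun t : ℝ =>
              lam ^ 2 * (5 + Real.sqrt 5) / 10 + lam ^ 2 * (Real.sqrt 5 + 2) / 10 * t⁻¹) atTop :=
            limsup_le_limsup hFU hbddGe.isCoboundedUnder_le hUtend.isBoundedUnder_le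
        _ = lam ^ 2 * (5 + Real.sqrt 5) / 10 := hUtend.limsup_eq
    · exact le_limsup_of_frequently_le hfreqmax hbddLe
  · rw [Filter.liminf_congr hEq, ← hA'target]
    apply le_antisymm
    · exact liminf_le_of_frequently_le hfreqmin hbddGe
    · calc lam ^ 2 * (5 - Real.sqrt 5) / 10
          = liminf (fun t : ℝ =>
              lam ^ 2 * (5 - Real.sqrt 5) / 10 - lam ^ 2 * (Real.sqrt 5 + 2) / 10 * t⁻¹) atTop :=
            hLtend.liminf_eq.symm
        _ ≤ liminf (GoldenAux.Fex lam) atTop :=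
            liminf_le_liminf hFL hLtend.isBoundedUnder_ge hbddLe.isCoboundedUnder_ge
end
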